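/- arXiv:1909.10354 — 6 statements merged into one kernel-verified Lean document; each statement's English description precedes it below -/
import Mathlib

section
/- Let x = (x^1,...,x^T) be a sequence of values in [0,1] and 1 ≥ α > β ≥ 0. Let y = RS(x, α, β). Then the total transition cost of y is at most 1/(α-β) times that of x: ∑_{t=1}^{T-1} |y^{t+1} - y^t| ≤ (1/(α-β)) · ∑_{t=1}^{T-1} |x^{t+1} - x^t|. -/
/- The two-threshold rounding scheme `RS`.  Given a time horizon `T`, a sequence
`x : ℕ → ℝ` (indices `0, …, T-1`) of values in `[0,1]` and thresholds `α ≥ β`,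
it produces a `{0,1}`-valued sequence `y`:
* if `x t ≥ α` then `y t = 1`;
* if `x t ≤ β` then `y t = 0`;
* on a maximal interval `[t₁,t₂]` with `β < x < α` throughout, `y = 1` iff both
  (`t₁ = 0` or `x (t₁-1) ≥ α`) and (`t₂ = T-1` or `x (t₂+1) ≥ α`);
  this is expressed below by saying that the nearest non-strict index on each
  side (within the horizon), when it exists, carries a value `≥ α`. -/
open Classical in
noncomputable def RS (T : ℕ) (x : ℕ → ℝ) (α β : ℝ) (t : ℕ) : ℝ :=
  if α ≤ x t then 1
  else if x t ≤ β then 0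
  else if ((∀ s, s ≤ t → β < x s ∧ x s < α) ∨
           (∃ s, s < t ∧ α ≤ x s ∧ ∀ u, s < u → u ≤ t → β < x u ∧ x u < α)) ∧
          ((∀ s, t ≤ s → s < T → β < x s ∧ x s < α) ∨
           (∃ s, t < s ∧ s < T ∧ α ≤ x s ∧ ∀ u, t ≤ u → u < s → β < x u ∧ x u < α))
  then 1 else 0

/- Between two consecutive times at which `x` lies outside the band `(β, α)`, `y` changes at most
once, and only if `x` is on opposite sides of the band at those times, which costs `x` a variation
of at least `α - β`.  This is made local by an amortization: with the potential below,
`(α - β) |Δy| + Δpotential ≤ |Δx|` at every step, the potential vanishes at time `0` and is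
nonnegative at time `T - 1`, and the sum telescopes. -/

namespace RS

def InBand (x : ℕ → ℝ) (α β : ℝ) (t : ℕ) : Prop := β < x t ∧ x t < α

def InBandUpTo (x : ℕ → ℝ) (α β : ℝ) (t : ℕ) : Prop := ∀ s ≤ t, InBand x α β s

/- `LeftHigh` (`RightHigh`) says that the nearest index outside the band at or before (after) `t`,
within the horizon, is high, or that there is none: these are the two conditions in `RS`. -/
def LeftHigh (x : ℕ → ℝ) (α β : ℝ) (t : ℕ) : Prop :=
  InBandUpTo x α β t ∨ ∃ s < t, α ≤ x s ∧ ∀ u, s < u → u ≤ t → InBand x α β u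

def RightHigh (T : ℕ) (x : ℕ → ℝ) (α β : ℝ) (t : ℕ) : Prop :=
  (∀ s, t ≤ s → s < T → InBand x α β s) ∨
    ∃ s, t < s ∧ s < T ∧ α ≤ x s ∧ ∀ u, t ≤ u → u < s → InBand x α β u

/- The credit held at a band point once `x` has left the band before: after a high point, the
descent `α - x t` already made while `y` stays `1`, or minus the descent `x t - β` still owed if
`y` has already dropped to `0`; after a low point, the ascent `x t - β` already made. -/
open Classical in
noncomputable def potential (T : ℕ) (x : ℕ → ℝ) (α β : ℝ) (t : ℕ) : ℝ :=
  if InBand x α β t ∧ ¬ InBandUpTo x α β t then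
    if LeftHigh x α β t then
      if RightHigh T x α β t then α - x t else β - x t
    else x t - β
  else 0

variable {T : ℕ} {x : ℕ → ℝ} {α β : ℝ} {t : ℕ}

theorem eq_one_of_high (h : α ≤ x t) : RS T x α β t = 1 := if_pos h

theorem eq_zero_of_low (hαβ : β < α) (h : x t ≤ β) : RS T x α β t = 0 := by
  rw [RS, if_neg (h.trans_lt hαβ).not_ge, if_pos h]

open Classical in
theorem eq_ite_of_inBand (hb : InBand x α β t) :
    RS T x α β t = if LeftHigh x α β t ∧ RightHigh T x α β t then 1 else 0 := by
  rw [RS, if_neg hb.2.not_ge, if_neg hb.1.not_ge]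
  exact if_congr Iff.rfl rfl rfl

theorem eq_one_of_inBand (hb : InBand x α β t) (hL : LeftHigh x α β t)
    (hR : RightHigh T x α β t) : RS T x α β t = 1 := by
  rw [eq_ite_of_inBand hb, if_pos ⟨hL, hR⟩]

theorem eq_zero_of_inBand (hb : InBand x α β t)
    (h : ¬ (LeftHigh x α β t ∧ RightHigh T x α β t)) : RS T x α β t = 0 := by
  rw [eq_ite_of_inBand hb, if_neg h]

theorem inBandUpTo_zero (hb : InBand x α β 0) : InBandUpTo x α β 0 :=
  fun _ hs => Nat.le_zero.1 hs ▸ hb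

theorem not_inBandUpTo_succ (h : ¬ InBand x α β t) : ¬ InBandUpTo x α β (t + 1) :=
  fun h' => h (h' t t.le_succ)

theorem leftHigh_succ_of_high (h : α ≤ x t) (hb : InBand x α β (t + 1)) :
    LeftHigh x α β (t + 1) :=
  Or.inr ⟨t, t.lt_succ_self, h, fun u hu hu' => (show u = t + 1 by omega) ▸ hb⟩

theorem not_leftHigh_succ_of_low (hαβ : β < α) (h : x t ≤ β) :
    ¬ LeftHigh x α β (t + 1) := by
  rintro (h0 | ⟨s, hs, hsα, hsu⟩)
  · exact (h0 t t.le_succ).1.not_ge h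
  · rcases Nat.lt_succ_iff_lt_or_eq.1 hs with hs | rfl
    · exact (hsu t hs t.le_succ).1.not_ge h
    · linarith

theorem rightHigh_of_succ_high (hT : t + 1 < T) (hb : InBand x α β t) (h : α ≤ x (t + 1)) :
    RightHigh T x α β t :=
  Or.inr ⟨t + 1, t.lt_succ_self, hT, h, fun u hu hu' => (show u = t by omega) ▸ hb⟩

theorem not_rightHigh_of_succ_low (hαβ : β < α) (hT : t + 1 < T) (h : x (t + 1) ≤ β) :
    ¬ RightHigh T x α β t := by
  rintro (h0 | ⟨s, hs, hsT, hsα, hsu⟩)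
  · exact (h0 (t + 1) t.le_succ hT).1.not_ge h
  · rcases eq_or_ne s (t + 1) with rfl | hs'
    · linarith
    · exact (hsu (t + 1) t.le_succ (by omega)).1.not_ge h

theorem rightHigh_of_inBand_of_le_succ (hb : InBand x α β t) (hT : T ≤ t + 1) :
    RightHigh T x α β t :=
  Or.inl fun s hs hsT => (show s = t by omega) ▸ hb

theorem inBandUpTo_succ_iff (hb' : InBand x α β (t + 1)) :
    InBandUpTo x α β (t + 1) ↔ InBandUpTo x α β t := by
  refine ⟨fun h s hs => h s (hs.trans t.le_succ), fun h s hs => ?_⟩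
  rcases Nat.le_succ_iff.1 hs with hs | rfl
  exacts [h s hs, hb']

theorem leftHigh_succ_iff (hb : InBand x α β t) (hb' : InBand x α β (t + 1)) :
    LeftHigh x α β (t + 1) ↔ LeftHigh x α β t := by
  rw [LeftHigh, LeftHigh, inBandUpTo_succ_iff hb']
  refine or_congr_right ⟨fun ⟨s, hs, hsα, hsu⟩ => ?_, fun ⟨s, hs, hsα, hsu⟩ => ?_⟩
  · rcases Nat.lt_succ_iff_lt_or_eq.1 hs with hs | rfl
    · exact ⟨s, hs, hsα, fun u hu hu' => hsu u hu (hu'.trans t.le_succ)⟩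
    · exact absurd hsα hb.2.not_ge
  · refine ⟨s, hs.trans t.lt_succ_self, hsα, fun u hu hu' => ?_⟩
    rcases Nat.le_succ_iff.1 hu' with hu' | rfl
    exacts [hsu u hu hu', hb']

theorem rightHigh_succ_iff (hb : InBand x α β t) (hb' : InBand x α β (t + 1)) :
    RightHigh T x α β (t + 1) ↔ RightHigh T x α β t := by
  refine or_congr ⟨fun h s hs hsT => ?_, fun h s hs hsT => h s (by omega) hsT⟩
    ⟨fun ⟨s, hs, hsT, hsα, hsu⟩ => ⟨s, by omega, hsT, hsα, fun u hu hu' => ?_⟩,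
      fun ⟨s, hs, hsT, hsα, hsu⟩ =>
        ⟨s, ?_, hsT, hsα, fun u hu hu' => hsu u (by omega) hu'⟩⟩
  · rcases eq_or_lt_of_le hs with rfl | hs
    exacts [hb, h s hs hsT]
  · rcases eq_or_lt_of_le hu with rfl | hu
    exacts [hb, hsu u hu hu']
  · rcases eq_or_ne s (t + 1) with rfl | hs'
    exacts [absurd hsα hb'.2.not_ge, by omega]

theorem potential_of_not_inBand (h : ¬ InBand x α β t) : potential T x α β t = 0 :=
  if_neg fun h' => h h'.1

theorem potential_of_rightHigh (hb : InBand x α β t) (h0 : ¬ InBandUpTo x α β t)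
    (hL : LeftHigh x α β t) (hR : RightHigh T x α β t) :
    potential T x α β t = α - x t := by
  rw [potential, if_pos ⟨hb, h0⟩, if_pos hL, if_pos hR]

theorem potential_of_not_rightHigh (hb : InBand x α β t) (h0 : ¬ InBandUpTo x α β t)
    (hL : LeftHigh x α β t) (hR : ¬ RightHigh T x α β t) :
    potential T x α β t = β - x t := by
  rw [potential, if_pos ⟨hb, h0⟩, if_pos hL, if_neg hR]

theorem potential_of_not_leftHigh (hb : InBand x α β t) (hL : ¬ LeftHigh x α β t) :
    potential T x α β t = x t - β := by
  rw [potential, if_pos ⟨hb, fun h0 => hL (Or.inl h0)⟩, if_neg hL]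

theorem potential_zero : potential T x α β 0 = 0 :=
  if_neg fun h => h.2 (inBandUpTo_zero h.1)

theorem potential_nonneg_of_rightHigh (hR : RightHigh T x α β t) :
    0 ≤ potential T x α β t := by
  unfold potential
  split_ifs with h hL
  · exact sub_nonneg.2 h.1.2.le
  · exact sub_nonneg.2 h.1.1.le
  · exact le_rfl

theorem neg_potential_le_of_inBand (hb : InBand x α β t) :
    -potential T x α β t ≤ x t - β := by
  unfold potential
  split_ifs <;> linarith [hb.1, hb.2]

theorem step_le_of_high (hαβ : β < α) (h : α ≤ x t) :
    (α - β) * |RS T x α β (t + 1) - RS T x α β t| + potential T x α β (t + 1) ≤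
      |x (t + 1) - x t| + potential T x α β t := by
  have hΔ := neg_abs_le (x (t + 1) - x t)
  have hnb : ¬ InBand x α β t := fun hb => hb.2.not_ge h
  rw [eq_one_of_high h, potential_of_not_inBand hnb]
  by_cases hA : α ≤ x (t + 1)
  · rw [eq_one_of_high hA, potential_of_not_inBand fun hb' => hb'.2.not_ge hA]
    simp
  by_cases hB : x (t + 1) ≤ β
  · rw [eq_zero_of_low hαβ hB, potential_of_not_inBand fun hb' => hb'.1.not_ge hB]
    norm_num
    linarith
  have hb' : InBand x α β (t + 1) := ⟨not_le.1 hB, not_le.1 hA⟩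
  have hL := leftHigh_succ_of_high h hb'
  by_cases hR : RightHigh T x α β (t + 1)
  · rw [eq_one_of_inBand hb' hL hR,
      potential_of_rightHigh hb' (not_inBandUpTo_succ hnb) hL hR]
    norm_num
    linarith
  · rw [eq_zero_of_inBand hb' fun h => hR h.2,
      potential_of_not_rightHigh hb' (not_inBandUpTo_succ hnb) hL hR]
    norm_num
    linarith

theorem step_le_of_low (hαβ : β < α) (h : x t ≤ β) :
    (α - β) * |RS T x α β (t + 1) - RS T x α β t| + potential T x α β (t + 1) ≤
      |x (t + 1) - x t| + potential T x α β t := by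
  have hΔ := le_abs_self (x (t + 1) - x t)
  rw [eq_zero_of_low hαβ h, potential_of_not_inBand fun hb => hb.1.not_ge h]
  by_cases hA : α ≤ x (t + 1)
  · rw [eq_one_of_high hA, potential_of_not_inBand fun hb' => hb'.2.not_ge hA]
    norm_num
    linarith
  by_cases hB : x (t + 1) ≤ β
  · rw [eq_zero_of_low hαβ hB, potential_of_not_inBand fun hb' => hb'.1.not_ge hB]
    simp
  have hb' : InBand x α β (t + 1) := ⟨not_le.1 hB, not_le.1 hA⟩
  have hL := not_leftHigh_succ_of_low hαβ h
  rw [eq_zero_of_inBand hb' fun h => hL h.1, potential_of_not_leftHigh hb' hL]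
  norm_num
  linarith

theorem step_le_of_inBand_of_succ_high (hT : t + 1 < T) (hb : InBand x α β t)
    (h : α ≤ x (t + 1)) :
    (α - β) * |RS T x α β (t + 1) - RS T x α β t| + potential T x α β (t + 1) ≤
      |x (t + 1) - x t| + potential T x α β t := by
  have hΔ := le_abs_self (x (t + 1) - x t)
  have hR := rightHigh_of_succ_high hT hb h
  rw [eq_one_of_high h, potential_of_not_inBand fun hb' => hb'.2.not_ge h]
  by_cases hL : LeftHigh x α β t
  · rw [eq_one_of_inBand hb hL hR]
    norm_num
    linarith [potential_nonneg_of_rightHigh hR, abs_nonneg (x (t + 1) - x t)]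
  · rw [eq_zero_of_inBand hb fun h => hL h.1, potential_of_not_leftHigh hb hL]
    norm_num
    linarith

theorem step_le_of_inBand_of_succ_low (hαβ : β < α) (hT : t + 1 < T) (hb : InBand x α β t)
    (h : x (t + 1) ≤ β) :
    (α - β) * |RS T x α β (t + 1) - RS T x α β t| + potential T x α β (t + 1) ≤
      |x (t + 1) - x t| + potential T x α β t := by
  have hΔ := neg_abs_le (x (t + 1) - x t)
  have hR := not_rightHigh_of_succ_low hαβ hT h
  rw [eq_zero_of_low hαβ h, potential_of_not_inBand fun hb' => hb'.1.not_ge h,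
    eq_zero_of_inBand hb fun h => hR h.2]
  norm_num
  linarith [neg_potential_le_of_inBand (T := T) hb]

theorem succ_eq_of_inBand (hb : InBand x α β t) (hb' : InBand x α β (t + 1)) :
    RS T x α β (t + 1) = RS T x α β t := by
  rw [eq_ite_of_inBand hb, eq_ite_of_inBand hb', leftHigh_succ_iff hb hb',
    rightHigh_succ_iff hb hb']

theorem potential_succ_sub_le_of_inBand (hb : InBand x α β t)
    (hb' : InBand x α β (t + 1)) :
    potential T x α β (t + 1) - potential T x α β t ≤ |x (t + 1) - x t| := by
  have hΔ := abs_le.1 (le_refl |x (t + 1) - x t|)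
  rw [potential, potential, leftHigh_succ_iff hb hb', rightHigh_succ_iff hb hb',
    inBandUpTo_succ_iff hb']
  classical
  simp only [hb, hb', true_and]
  split_ifs <;> linarith

theorem step_le_of_inBand_of_inBand (hb : InBand x α β t) (hb' : InBand x α β (t + 1)) :
    (α - β) * |RS T x α β (t + 1) - RS T x α β t| + potential T x α β (t + 1) ≤
      |x (t + 1) - x t| + potential T x α β t := by
  rw [succ_eq_of_inBand hb hb', sub_self, abs_zero, mul_zero, zero_add]
  linarith [potential_succ_sub_le_of_inBand (T := T) hb hb']

theorem step_le (hαβ : β < α) (hT : t + 1 < T) :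
    (α - β) * |RS T x α β (t + 1) - RS T x α β t| + potential T x α β (t + 1) ≤
      |x (t + 1) - x t| + potential T x α β t := by
  by_cases hA : α ≤ x t
  · exact step_le_of_high hαβ hA
  by_cases hB : x t ≤ β
  · exact step_le_of_low hαβ hB
  have hb : InBand x α β t := ⟨not_le.1 hB, not_le.1 hA⟩
  by_cases hA' : α ≤ x (t + 1)
  · exact step_le_of_inBand_of_succ_high hT hb hA'
  by_cases hB' : x (t + 1) ≤ β
  · exact step_le_of_inBand_of_succ_low hαβ hT hb hB'
  exact step_le_of_inBand_of_inBand hb ⟨not_le.1 hB', not_le.1 hA'⟩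

theorem potential_last_nonneg : 0 ≤ potential T x α β (T - 1) := by
  by_cases hb : InBand x α β (T - 1)
  · exact potential_nonneg_of_rightHigh (rightHigh_of_inBand_of_le_succ hb le_tsub_add)
  · rw [potential_of_not_inBand hb]

end RS

theorem stmt_2_general (T : ℕ) (x : ℕ → ℝ) (α β : ℝ)
    (hαβ : β < α) :
    ∑ t ∈ Finset.range (T - 1), |RS T x α β (t + 1) - RS T x α β t| ≤
      (1 / (α - β)) * ∑ t ∈ Finset.range (T - 1), |x (t + 1) - x t| := by
  rw [one_div, inv_mul_eq_div, le_div_iff₀' (sub_pos.2 hαβ), Finset.mul_sum]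
  calc ∑ t ∈ Finset.range (T - 1), (α - β) * |RS T x α β (t + 1) - RS T x α β t|
      ≤ ∑ t ∈ Finset.range (T - 1),
          (|x (t + 1) - x t| + (RS.potential T x α β t - RS.potential T x α β (t + 1))) := by
        refine Finset.sum_le_sum fun t ht => ?_
        linarith [RS.step_le (x := x) hαβ (Nat.lt_sub_iff_add_lt.1 (Finset.mem_range.1 ht))]
    _ = ∑ t ∈ Finset.range (T - 1), |x (t + 1) - x t| +
          (RS.potential T x α β 0 - RS.potential T x α β (T - 1)) := by
        rw [Finset.sum_add_distrib, Finset.sum_range_sub']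
    _ ≤ ∑ t ∈ Finset.range (T - 1), |x (t + 1) - x t| :=
        add_le_of_nonpos_right <| sub_nonpos.2 <|
          RS.potential_zero.trans_le RS.potential_last_nonneg

/-- the total transition cost of `y = RS(x,α,β)` is at most
`1/(α-β)` times that of `x`. -/
theorem stmt_2 (T : ℕ) (x : ℕ → ℝ) (α β : ℝ)
    (hx : ∀ t, t < T → 0 ≤ x t ∧ x t ≤ 1)
    (hα : α ≤ 1) (hαβ : β < α) (hβ : 0 ≤ β) :
    ∑ t ∈ Finset.range (T - 1), |RS T x α β (t + 1) - RS T x α β t| ≤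
      (1 / (α - β)) * ∑ t ∈ Finset.range (T - 1), |x (t + 1) - x t| :=
  stmt_2_general T x α β hαβ
end

section
/- Let y = RS(x, α, β) with 1 ≥ α > β ≥ 0. If y^t = 0 and y^{t+1} = 1 (a 0→1 jump), then there exist times t1 ≤ t < t2 ≤ T such that x^{t1} ≤ β, x^{t2} ≥ α, and β < x^s < α for all s with t1 < s < t2; in particular x^{t2} − x^{t1} ≥ α − β. -/
/-! A `0 → 1` jump cannot occur inside a band run (`β < x < α`), since all the
times of one run receive the same value, so `x (t+1) ≥ α`. Going back from `t` to the last time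
outside the band, that time cannot carry a value `≥ α`, since then the run ending at `t` would be
flanked by high values on both sides and be rounded up; hence its value is `≤ β`. -/

namespace TwoThreshold

variable {T : ℕ} {x : ℕ → ℝ} {α β : ℝ} {t : ℕ}

def InBand (x : ℕ → ℝ) (α β : ℝ) (s : ℕ) : Prop := β < x s ∧ x s < α

/-- The band run through `t` starts at time `0` or right after a value `≥ α`. -/
def StartsHigh (x : ℕ → ℝ) (α β : ℝ) (t : ℕ) : Prop :=
  (∀ s, s ≤ t → InBand x α β s) ∨
    ∃ s, s < t ∧ α ≤ x s ∧ ∀ u, s < u → u ≤ t → InBand x α β u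

/-- The band run through `t` reaches the horizon `T` or ends right before a value `≥ α`. -/
def EndsHigh (T : ℕ) (x : ℕ → ℝ) (α β : ℝ) (t : ℕ) : Prop :=
  (∀ s, t ≤ s → s < T → InBand x α β s) ∨
    ∃ s, t < s ∧ s < T ∧ α ≤ x s ∧ ∀ u, t ≤ u → u < s → InBand x α β u

theorem lt_of_RS_eq_zero (h : RS T x α β t = 0) : x t < α := by
  by_contra! hα
  simp [RS, hα] at h

theorem RS_eq_one_iff_of_lt (hα : x t < α) :
    RS T x α β t = 1 ↔ InBand x α β t ∧ StartsHigh x α β t ∧ EndsHigh T x α β t := by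
  unfold RS
  split_ifs with h₁ h₂ h₃
  · exact absurd h₁ hα.not_ge
  · exact iff_of_false zero_ne_one fun ⟨hb, _⟩ => hb.1.not_ge h₂
  · exact iff_of_true rfl ⟨⟨not_le.1 h₂, hα⟩, h₃⟩
  · exact iff_of_false zero_ne_one fun ⟨_, hc⟩ => h₃ hc

theorem StartsHigh.of_succ (h : StartsHigh x α β (t + 1)) (hα : x t < α) :
    InBand x α β t ∧ StartsHigh x α β t := by
  rcases h with h | ⟨s, hs, hαs, hband⟩
  · exact ⟨h t t.le_succ, .inl fun s hs => h s (hs.trans t.le_succ)⟩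
  · obtain hst | rfl := Nat.lt_succ_iff_lt_or_eq.1 hs
    · refine ⟨hband t hst t.le_succ, .inr ⟨s, hst, hαs, fun u hu hut => ?_⟩⟩
      exact hband u hu (hut.trans t.le_succ)
    · exact absurd hαs hα.not_ge

theorem EndsHigh.of_succ (h : EndsHigh T x α β (t + 1)) (hb : InBand x α β t) :
    EndsHigh T x α β t := by
  rcases h with h | ⟨s, hs, hsT, hαs, hband⟩
  · refine .inl fun s hs hsT => ?_
    obtain rfl | hts := hs.eq_or_lt
    exacts [hb, h s hts hsT]
  · refine .inr ⟨s, by omega, hsT, hαs, fun u hu hus => ?_⟩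
    obtain rfl | htu := hu.eq_or_lt
    exacts [hb, hband u htu hus]

theorem EndsHigh.of_high_succ (hT : t + 1 < T) (hα : α ≤ x (t + 1)) (hb : InBand x α β t) :
    EndsHigh T x α β t :=
  .inr ⟨t + 1, t.lt_succ_self, hT, hα, fun u hu hut => (by omega : u = t) ▸ hb⟩

theorem le_of_RS_eq_zero_of_RS_succ_eq_one (h0 : RS T x α β t = 0)
    (h1 : RS T x α β (t + 1) = 1) : α ≤ x (t + 1) := by
  by_contra! hα
  have hαt := lt_of_RS_eq_zero h0
  obtain ⟨-, hl, hr⟩ := (RS_eq_one_iff_of_lt hα).1 h1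
  obtain ⟨hbt, hlt⟩ := hl.of_succ hαt
  have h1t := (RS_eq_one_iff_of_lt hαt).2 ⟨hbt, hlt, hr.of_succ hbt⟩
  exact zero_ne_one (h0.symm.trans h1t)

theorem exists_le_of_not_startsHigh (hα : x t < α) (h : ¬ StartsHigh x α β t) :
    ∃ m ≤ t, x m ≤ β ∧ ∀ u, m < u → u ≤ t → InBand x α β u := by
  classical
  obtain ⟨s₀, hs₀t, hs₀⟩ : ∃ s ≤ t, ¬ InBand x α β s := by
    by_contra! hall
    exact h (.inl hall)
  set m := Nat.findGreatest (fun s => ¬ InBand x α β s) t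
  have hm : ¬ InBand x α β m :=
    Nat.findGreatest_spec (P := fun s => ¬ InBand x α β s) hs₀t hs₀
  have hmt : m ≤ t := Nat.findGreatest_le t
  have hband : ∀ u, m < u → u ≤ t → InBand x α β u := fun u hmu hut =>
    not_not.1 (Nat.findGreatest_is_greatest hmu hut)
  have hxm : x m < α := by
    by_contra! hαm
    obtain hmlt | hmeq := hmt.lt_or_eq
    · exact h (.inr ⟨m, hmlt, hαm, hband⟩)
    · exact hα.not_ge (hmeq ▸ hαm)
  exact ⟨m, hmt, not_lt.1 fun hβm => hm ⟨hβm, hxm⟩, hband⟩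

theorem exists_le_of_RS_eq_zero (hT : t + 1 < T) (h0 : RS T x α β t = 0)
    (hα : α ≤ x (t + 1)) : ∃ m ≤ t, x m ≤ β ∧ ∀ u, m < u → u ≤ t → InBand x α β u := by
  have hxt := lt_of_RS_eq_zero h0
  by_cases hβ : x t ≤ β
  · exact ⟨t, le_rfl, hβ, fun u htu hut => absurd hut htu.not_ge⟩
  have hb : InBand x α β t := ⟨not_le.1 hβ, hxt⟩
  refine exists_le_of_not_startsHigh hxt fun hl => ?_
  have h1t := (RS_eq_one_iff_of_lt hxt).2 ⟨hb, hl, .of_high_succ hT hα hb⟩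
  exact zero_ne_one (h0.symm.trans h1t)

end TwoThreshold

theorem stmt_3_general (T : ℕ) (x : ℕ → ℝ) (α β : ℝ)
    (t : ℕ) (ht : t + 1 < T)
    (h0 : RS T x α β t = 0) (h1 : RS T x α β (t + 1) = 1) :
    ∃ t₁ t₂, t₁ ≤ t ∧ t < t₂ ∧ t₂ < T ∧ x t₁ ≤ β ∧ α ≤ x t₂ ∧
      (∀ s, t₁ < s → s < t₂ → β < x s ∧ x s < α) ∧
      α - β ≤ x t₂ - x t₁ := by
  have hαt := TwoThreshold.le_of_RS_eq_zero_of_RS_succ_eq_one h0 h1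
  obtain ⟨t₁, ht₁, hβt₁, hband⟩ := TwoThreshold.exists_le_of_RS_eq_zero ht h0 hαt
  exact ⟨t₁, t + 1, ht₁, t.lt_succ_self, ht, hβt₁, hαt,
    fun s hs hst => hband s hs (Nat.lt_succ_iff.1 hst), by linarith⟩

/-- a `0 → 1` jump of `y = RS(x,α,β)` between `t` and `t+1` is
witnessed by times `t₁ ≤ t < t₂` with `x^{t₁} ≤ β`, `x^{t₂} ≥ α` and
`β < x < α` strictly between them; in particular `x^{t₂} - x^{t₁} ≥ α - β`. -/
theorem stmt_3 (T : ℕ) (x : ℕ → ℝ) (α β : ℝ)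
    (hx : ∀ t, t < T → 0 ≤ x t ∧ x t ≤ 1)
    (hα : α ≤ 1) (hαβ : β < α) (hβ : 0 ≤ β)
    (t : ℕ) (ht : t + 1 < T)
    (h0 : RS T x α β t = 0) (h1 : RS T x α β (t + 1) = 1) :
    ∃ t₁ t₂, t₁ ≤ t ∧ t < t₂ ∧ t₂ < T ∧ x t₁ ≤ β ∧ α ≤ x t₂ ∧
      (∀ s, t₁ < s → s < t₂ → β < x s ∧ x s < α) ∧
      α - β ≤ x t₂ - x t₁ :=
  stmt_3_general T x α β t ht h0 h1
end

section
/- Let y = RS(x, α, β) with 1 ≥ α > β ≥ 0. The number of indices t ∈ {1,...,T−1} with y^t ≠ y^{t+1} is at most (1/(α−β)) · ∑_{t=1}^{T-1} |x^{t+1} − x^t|. -/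
lemma le_or_le_or_mem_Ioo {R : Type*} [LinearOrder R] (a b c : R) :
    b ≤ a ∨ a ≤ c ∨ a ∈ Set.Ioo c b := by
  rcases le_or_gt b a with h | h
  · exact .inl h
  rcases le_or_gt a c with h' | h'
  · exact .inr (.inl h')
  · exact .inr (.inr ⟨h', h⟩)

theorem Finset.card_nsmul_le_sum_of_pairwiseDisjoint {ι α M : Type*} [DecidableEq α]
    [AddCommMonoid M] [PartialOrder M] [IsOrderedAddMonoid M] {J : Finset ι} {U : Finset α}
    {S : ι → Finset α} {f : α → M} {c : M} (hS : ∀ i ∈ J, S i ⊆ U)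
    (hdisj : (J : Set ι).PairwiseDisjoint S)
    (hf : ∀ a ∈ U, 0 ≤ f a) (hc : ∀ i ∈ J, c ≤ ∑ a ∈ S i, f a) :
    J.card • c ≤ ∑ a ∈ U, f a :=
  calc J.card • c ≤ ∑ i ∈ J, ∑ a ∈ S i, f a := Finset.card_nsmul_le_sum _ _ _ hc
    _ = ∑ a ∈ J.biUnion S, f a := (Finset.sum_biUnion hdisj).symm
    _ ≤ ∑ a ∈ U, f a :=
      Finset.sum_le_sum_of_subset_of_nonneg (Finset.biUnion_subset.2 hS) fun a ha _ => hf a ha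

section RoundingScheme

variable {T : ℕ} {x : ℕ → ℝ} {α β : ℝ} {t : ℕ}

def HighOnLeft (x : ℕ → ℝ) (α β : ℝ) (t : ℕ) : Prop :=
  (∀ s, s ≤ t → x s ∈ Set.Ioo β α) ∨
    ∃ s, s < t ∧ α ≤ x s ∧ ∀ u, s < u → u ≤ t → x u ∈ Set.Ioo β α

def HighOnRight (T : ℕ) (x : ℕ → ℝ) (α β : ℝ) (t : ℕ) : Prop :=
  (∀ s, t ≤ s → s < T → x s ∈ Set.Ioo β α) ∨
    ∃ s, t < s ∧ s < T ∧ α ≤ x s ∧ ∀ u, t ≤ u → u < s → x u ∈ Set.Ioo β α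

lemma RS_eq_one_of_le (h : α ≤ x t) : RS T x α β t = 1 := by
  rw [RS, if_pos h]

lemma RS_eq_zero_of_le (hαβ : β < α) (h : x t ≤ β) : RS T x α β t = 0 := by
  rw [RS, if_neg (by linarith), if_pos h]

open Classical in
lemma RS_of_mem_Ioo (h : x t ∈ Set.Ioo β α) :
    RS T x α β t = if HighOnLeft x α β t ∧ HighOnRight T x α β t then 1 else 0 := by
  rw [RS, if_neg h.2.not_ge, if_neg h.1.not_ge]
  exact if_congr Iff.rfl rfl rfl

lemma not_highOnLeft_iff (hαβ : β < α) (ht : x t ∈ Set.Ioo β α) :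
    ¬HighOnLeft x α β t ↔
      ∃ l < t, x l ≤ β ∧ ∀ u, l < u → u ≤ t → x u ∈ Set.Ioo β α := by
  classical
  constructor
  · intro h
    have hex : ∃ s ≤ t, x s ∉ Set.Ioo β α := by
      by_contra! hall
      exact h (.inl hall)
    obtain ⟨s, hst, hs⟩ := hex
    set l := Nat.findGreatest (fun s => x s ∉ Set.Ioo β α) t
    have hl : x l ∉ Set.Ioo β α := Nat.findGreatest_spec (P := fun s => x s ∉ Set.Ioo β α) hst hs
    have hgray : ∀ u, l < u → u ≤ t → x u ∈ Set.Ioo β α := fun u hlu hut =>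
      not_not.mp (Nat.findGreatest_is_greatest hlu hut)
    have hlt : l < t := lt_of_le_of_ne (Nat.findGreatest_le t) fun e => hl (e ▸ ht)
    refine ⟨l, hlt, ?_, hgray⟩
    by_contra! hβl
    exact h (.inr ⟨l, hlt, not_lt.mp fun hlα => hl ⟨hβl, hlα⟩, hgray⟩)
  · rintro ⟨l, hlt, hl, hgray⟩ (hall | ⟨s, hst, hs, hgray'⟩)
    · exact (hall l hlt.le).1.not_ge hl
    · rcases lt_trichotomy s l with hsl | rfl | hls
      · exact (hgray' l hsl hlt.le).1.not_ge hl
      · linarith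
      · exact (hgray s hls hst.le).2.not_ge hs

lemma not_highOnRight_iff (hαβ : β < α) (ht : x t ∈ Set.Ioo β α) :
    ¬HighOnRight T x α β t ↔
      ∃ r, t < r ∧ r < T ∧ x r ≤ β ∧ ∀ u, t ≤ u → u < r → x u ∈ Set.Ioo β α := by
  classical
  constructor
  · intro h
    have hex : ∃ s, t ≤ s ∧ s < T ∧ x s ∉ Set.Ioo β α := by
      by_contra! hall
      exact h (.inl hall)
    set r := Nat.find hex
    obtain ⟨htr, hrT, hr⟩ : t ≤ r ∧ r < T ∧ x r ∉ Set.Ioo β α := Nat.find_spec hex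
    have hgray : ∀ u, t ≤ u → u < r → x u ∈ Set.Ioo β α := fun u htu hur => by
      have := Nat.find_min hex hur
      push Not at this
      exact this htu (hur.trans hrT)
    have htr' : t < r := lt_of_le_of_ne htr fun e => hr (e ▸ ht)
    refine ⟨r, htr', hrT, ?_, hgray⟩
    by_contra! hβr
    exact h (.inr ⟨r, htr', hrT, not_lt.mp fun hrα => hr ⟨hβr, hrα⟩, hgray⟩)
  · rintro ⟨r, htr, hrT, hr, hgray⟩ (hall | ⟨s, hts, hsT, hs, hgray'⟩)
    · exact (hall r htr.le hrT).1.not_ge hr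
    · rcases lt_trichotomy s r with hsr | rfl | hrs
      · exact (hgray s hts.le hsr).2.not_ge hs
      · linarith
      · exact (hgray' r htr.le hrs).1.not_ge hr

lemma highOnLeft_succ_iff (hαβ : β < α) (ht : x t ∈ Set.Ioo β α)
    (ht' : x (t + 1) ∈ Set.Ioo β α) : HighOnLeft x α β (t + 1) ↔ HighOnLeft x α β t := by
  rw [← not_iff_not, not_highOnLeft_iff hαβ ht', not_highOnLeft_iff hαβ ht]
  constructor
  · rintro ⟨l, hl, hlow, hgray⟩
    have hlt : l ≠ t := fun e => (e ▸ hlow).not_gt ht.1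
    exact ⟨l, by omega, hlow, fun u hlu hut => hgray u hlu (by omega)⟩
  · rintro ⟨l, hl, hlow, hgray⟩
    refine ⟨l, by omega, hlow, fun u hlu hut => ?_⟩
    rcases Nat.lt_or_ge u (t + 1) with hut' | hut'
    · exact hgray u hlu (by omega)
    · rwa [show u = t + 1 by omega]

lemma highOnRight_succ_iff (hαβ : β < α) (ht : x t ∈ Set.Ioo β α)
    (ht' : x (t + 1) ∈ Set.Ioo β α) :
    HighOnRight T x α β (t + 1) ↔ HighOnRight T x α β t := by
  rw [← not_iff_not, not_highOnRight_iff hαβ ht', not_highOnRight_iff hαβ ht]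
  constructor
  · rintro ⟨r, htr, hrT, hlow, hgray⟩
    refine ⟨r, by omega, hrT, hlow, fun u htu hur => ?_⟩
    rcases Nat.lt_or_ge t u with htu' | htu'
    · exact hgray u (by omega) hur
    · rwa [show u = t by omega]
  · rintro ⟨r, htr, hrT, hlow, hgray⟩
    have hrt : r ≠ t + 1 := fun e => (e ▸ hlow).not_gt ht'.1
    exact ⟨r, by omega, hrT, hlow, fun u htu hur => hgray u (by omega) hur⟩

lemma RS_succ_eq_of_mem_Ioo (hαβ : β < α) (ht : x t ∈ Set.Ioo β α)
    (ht' : x (t + 1) ∈ Set.Ioo β α) : RS T x α β (t + 1) = RS T x α β t := by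
  rw [RS_of_mem_Ioo ht, RS_of_mem_Ioo ht', highOnLeft_succ_iff hαβ ht ht',
    highOnRight_succ_iff hαβ ht ht']

def IsCrossing (x : ℕ → ℝ) (α β : ℝ) (l r : ℕ) : Prop :=
  l < r ∧ (α ≤ x l ∧ x r ≤ β ∨ x l ≤ β ∧ α ≤ x r) ∧ ∀ v, l < v → v < r → x v ∈ Set.Ioo β α

theorem exists_isCrossing_of_RS_ne (hαβ : β < α) (ht : t + 1 < T)
    (hjump : RS T x α β t ≠ RS T x α β (t + 1)) :
    ∃ l r, IsCrossing x α β l r ∧ r < T ∧ (α ≤ x l ∧ t = l ∨ α ≤ x r ∧ t + 1 = r) := by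
  rcases le_or_le_or_mem_Ioo (x t) α β with h | h | h <;>
    rcases le_or_le_or_mem_Ioo (x (t + 1)) α β with h' | h' | h'
  · exact absurd (by rw [RS_eq_one_of_le h, RS_eq_one_of_le h']) hjump
  · exact ⟨t, t + 1, ⟨by omega, .inl ⟨h, h'⟩, fun v _ _ => by omega⟩, ht, .inl ⟨h, rfl⟩⟩
  · have hR : ¬HighOnRight T x α β (t + 1) := fun hR => hjump <| by
      rw [RS_eq_one_of_le h, RS_of_mem_Ioo h',
        if_pos ⟨.inr ⟨t, by omega, h, fun u _ _ => by rwa [show u = t + 1 by omega]⟩, hR⟩]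
    obtain ⟨r, htr, hrT, hr, hgray⟩ := (not_highOnRight_iff hαβ h').1 hR
    exact ⟨t, r, ⟨by omega, .inl ⟨h, hr⟩, fun v htv hvr => hgray v htv hvr⟩, hrT,
      .inl ⟨h, rfl⟩⟩
  · exact ⟨t, t + 1, ⟨by omega, .inr ⟨h, h'⟩, fun v _ _ => by omega⟩, ht, .inr ⟨h', rfl⟩⟩
  · exact absurd (by rw [RS_eq_zero_of_le hαβ h, RS_eq_zero_of_le hαβ h']) hjump
  · refine absurd ?_ hjump
    rw [RS_eq_zero_of_le hαβ h, RS_of_mem_Ioo h', if_neg fun hc => (not_highOnLeft_iff hαβ h').2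
      ⟨t, by omega, h, fun u _ _ => by rwa [show u = t + 1 by omega]⟩ hc.1]
  · have hL : ¬HighOnLeft x α β t := fun hL => hjump <| by
      rw [RS_eq_one_of_le h', RS_of_mem_Ioo h,
        if_pos ⟨hL, .inr ⟨t + 1, by omega, ht, h', fun u _ _ => by rwa [show u = t by omega]⟩⟩]
    obtain ⟨l, hlt, hl, hgray⟩ := (not_highOnLeft_iff hαβ h).1 hL
    exact ⟨l, t + 1, ⟨by omega, .inr ⟨hl, h'⟩, fun v hlv hvt => hgray v hlv (by omega)⟩, ht,
      .inr ⟨h', rfl⟩⟩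
  · refine absurd ?_ hjump
    rw [RS_eq_zero_of_le hαβ h', RS_of_mem_Ioo h, if_neg fun hc => (not_highOnRight_iff hαβ h).2
      ⟨t + 1, by omega, ht, h', fun u _ _ => by rwa [show u = t by omega]⟩ hc.2]
  · exact absurd (RS_succ_eq_of_mem_Ioo hαβ h h').symm hjump

namespace IsCrossing

variable {l r l' r' : ℕ}

lemma left_notMem (h : IsCrossing x α β l r) : x l ∉ Set.Ioo β α := fun hm => by
  rcases h.2.1 with ⟨hl, -⟩ | ⟨hl, -⟩ <;> linarith [hm.1, hm.2]

lemma right_notMem (h : IsCrossing x α β l r) : x r ∉ Set.Ioo β α := fun hm => by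
  rcases h.2.1 with ⟨-, hr⟩ | ⟨-, hr⟩ <;> linarith [hm.1, hm.2]

lemma eq_and_eq_or_disjoint (h : IsCrossing x α β l r) (h' : IsCrossing x α β l' r') :
    (l = l' ∧ r = r') ∨ Disjoint (Finset.Ico l r) (Finset.Ico l' r') := by
  have h₁ : ¬(l < l' ∧ l' < r) := fun hc => h'.left_notMem (h.2.2 l' hc.1 hc.2)
  have h₂ : ¬(l < r' ∧ r' < r) := fun hc => h'.right_notMem (h.2.2 r' hc.1 hc.2)
  have h₃ : ¬(l' < l ∧ l < r') := fun hc => h.left_notMem (h'.2.2 l hc.1 hc.2)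
  have h₄ : ¬(l' < r ∧ r < r') := fun hc => h.right_notMem (h'.2.2 r hc.1 hc.2)
  by_cases hsep : r ≤ l' ∨ r' ≤ l
  · right
    rw [Finset.disjoint_left]
    intro s hs hs'
    rw [Finset.mem_Ico] at hs hs'
    omega
  · have := h.1
    have := h'.1
    left
    omega

lemma eq_of_jump (h : IsCrossing x α β l r) (hαβ : β < α) {t' : ℕ}
    (ht : α ≤ x l ∧ t = l ∨ α ≤ x r ∧ t + 1 = r)
    (ht' : α ≤ x l ∧ t' = l ∨ α ≤ x r ∧ t' + 1 = r) : t = t' := by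
  rcases h.2.1 with ⟨hl, hr⟩ | ⟨hl, hr⟩ <;> rcases ht with ⟨h₁, h₂⟩ | ⟨h₁, h₂⟩ <;>
    rcases ht' with ⟨h₃, h₄⟩ | ⟨h₃, h₄⟩ <;> first | omega | linarith

lemma sub_le_sum_abs (h : IsCrossing x α β l r) :
    α - β ≤ ∑ s ∈ Finset.Ico l r, |x (s + 1) - x s| :=
  calc α - β ≤ |x r - x l| := by
        rcases h.2.1 with ⟨hl, hr⟩ | ⟨hl, hr⟩
        · exact le_abs.mpr (.inr (by linarith))
        · exact le_abs.mpr (.inl (by linarith))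
    _ = |∑ s ∈ Finset.Ico l r, (x (s + 1) - x s)| := by rw [Finset.sum_Ico_sub x h.1.le]
    _ ≤ _ := Finset.abs_sum_le_sum_abs _ _

end IsCrossing

end RoundingScheme

open Classical in
theorem stmt_4_general (T : ℕ) (x : ℕ → ℝ) (α β : ℝ)
    (hαβ : β < α) :
    (((Finset.range (T - 1)).filter
        (fun t => RS T x α β t ≠ RS T x α β (t + 1))).card : ℝ) ≤
      (1 / (α - β)) * ∑ t ∈ Finset.range (T - 1), |x (t + 1) - x t| := by
  set J := (Finset.range (T - 1)).filter fun t => RS T x α β t ≠ RS T x α β (t + 1)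
  have hcross : ∀ t ∈ J, ∃ l r, IsCrossing x α β l r ∧ r < T ∧
      (α ≤ x l ∧ t = l ∨ α ≤ x r ∧ t + 1 = r) := by
    intro t ht
    rw [Finset.mem_filter, Finset.mem_range] at ht
    exact exists_isCrossing_of_RS_ne hαβ (by omega) ht.2
  choose! l r hcr hrT hjump using hcross
  have hsub : ∀ t ∈ J, Finset.Ico (l t) (r t) ⊆ Finset.range (T - 1) := fun t ht s hs => by
    rw [Finset.mem_Ico] at hs
    have := hrT t ht
    rw [Finset.mem_range]
    omega
  have hdisj : (J : Set ℕ).PairwiseDisjoint fun t => Finset.Ico (l t) (r t) := by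
    intro a ha b hb hab
    rcases (hcr a ha).eq_and_eq_or_disjoint (hcr b hb) with ⟨hl, hr⟩ | hd
    · have hb' := hjump b hb
      rw [← hl, ← hr] at hb'
      exact absurd ((hcr a ha).eq_of_jump hαβ (hjump a ha) hb') hab
    · exact hd
  have hcount := Finset.card_nsmul_le_sum_of_pairwiseDisjoint hsub hdisj
    (fun _ _ => abs_nonneg _) fun t ht => (hcr t ht).sub_le_sum_abs
  rw [nsmul_eq_mul] at hcount
  rwa [one_div, inv_mul_eq_div, le_div_iff₀ (sub_pos.2 hαβ)]

open Classical in
/-- the number of jumps of `y = RS(x,α,β)` is at most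
`(1/(α-β)) · ∑_t |x^{t+1} - x^t|`. -/
theorem stmt_4 (T : ℕ) (x : ℕ → ℝ) (α β : ℝ)
    (hx : ∀ t, t < T → 0 ≤ x t ∧ x t ≤ 1)
    (hα : α ≤ 1) (hαβ : β < α) (hβ : 0 ≤ β) :
    (((Finset.range (T - 1)).filter
        (fun t => RS T x α β t ≠ RS T x α β (t + 1))).card : ℝ) ≤
      (1 / (α - β)) * ∑ t ∈ Finset.range (T - 1), |x (t + 1) - x t| :=
  stmt_4_general T x α β hαβ
end

section
/- Combined rounding bound for multistage Prize-Collecting problems: let x ∈ [0,1]^T, α, β with 1 > α > β > 0, and y = RS(x, α, β). Then for nonnegative penalties π^t and transition weight w: ∑_t π^t (1 − y^t) ≤ (1/(1−α)) ∑_t π^t (1 − x^t) and w · ∑_{t<T} |y^{t+1} − y^t| ≤ (w/(α−β)) ∑_{t<T} |x^{t+1} − x^t|. -/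
/-- Left condition of `RS`: to the left of `t`, either everything is strictly
between the thresholds, or the nearest non-strict value is `≥ α`. -/
def Lc (x : ℕ → ℝ) (α β : ℝ) (t : ℕ) : Prop :=
  (∀ s, s ≤ t → β < x s ∧ x s < α) ∨
    (∃ s, s < t ∧ α ≤ x s ∧ ∀ u, s < u → u ≤ t → β < x u ∧ x u < α)

/-- Right condition of `RS`. -/
def Rc (T : ℕ) (x : ℕ → ℝ) (α β : ℝ) (t : ℕ) : Prop :=
  (∀ s, t ≤ s → s < T → β < x s ∧ x s < α) ∨
    (∃ s, t < s ∧ s < T ∧ α ≤ x s ∧ ∀ u, t ≤ u → u < s → β < x u ∧ x u < α)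

open Classical in
lemma RS_eq (T : ℕ) (x : ℕ → ℝ) (α β : ℝ) (t : ℕ) :
    RS T x α β t = if α ≤ x t then 1 else if x t ≤ β then 0 else
      if Lc x α β t ∧ Rc T x α β t then 1 else 0 := by
  unfold RS Lc Rc
  convert rfl

lemma RS_one {T : ℕ} {x : ℕ → ℝ} {α β : ℝ} {t : ℕ} (h : α ≤ x t) :
    RS T x α β t = 1 := by
  rw [RS_eq, if_pos h]

lemma RS_zero {T : ℕ} {x : ℕ → ℝ} {α β : ℝ} {t : ℕ} (hαβ : β < α) (h : x t ≤ β) :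
    RS T x α β t = 0 := by
  rw [RS_eq, if_neg (by linarith : ¬ α ≤ x t), if_pos h]

lemma RS_mem (T : ℕ) (x : ℕ → ℝ) (α β : ℝ) (t : ℕ) :
    RS T x α β t = 0 ∨ RS T x α β t = 1 := by
  rw [RS_eq]; split_ifs <;> simp

lemma RS_lt_alpha {T : ℕ} {x : ℕ → ℝ} {α β : ℝ} {t : ℕ} (h : RS T x α β t = 0) :
    x t < α := by
  by_contra hc; push_neg at hc
  rw [RS_one hc] at h; norm_num at h

lemma RS_mid_one_iff {T : ℕ} {x : ℕ → ℝ} {α β : ℝ} {t : ℕ}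
    (h1 : β < x t) (h2 : x t < α) :
    RS T x α β t = 1 ↔ (Lc x α β t ∧ Rc T x α β t) := by
  rw [RS_eq, if_neg (not_le.2 h2), if_neg (not_le.2 h1)]
  split_ifs with h
  · simp [h]
  · simp [h]

lemma Lc_self {x : ℕ → ℝ} {α β : ℝ} {t : ℕ} (h : Lc x α β t) :
    β < x t ∧ x t < α := by
  rcases h with h | ⟨s, hs, _, h⟩
  · exact h t le_rfl
  · exact h t hs le_rfl

lemma Lc_extend {x : ℕ → ℝ} {α β : ℝ} {n : ℕ} (h : Lc x α β n)
    (h1 : β < x (n+1)) (h2 : x (n+1) < α) : Lc x α β (n+1) := by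
  rcases h with h | ⟨s, hs, hsα, h⟩
  · left
    intro s hs
    rcases eq_or_lt_of_le hs with rfl | hlt
    · exact ⟨h1, h2⟩
    · exact h s (Nat.lt_succ_iff.mp hlt)
  · right
    refine ⟨s, hs.trans n.lt_succ_self, hsα, fun u hu1 hu2 => ?_⟩
    rcases eq_or_lt_of_le hu2 with rfl | hlt
    · exact ⟨h1, h2⟩
    · exact h u hu1 (Nat.lt_succ_iff.mp hlt)

/-- A `1 → 0` jump of `RS` requires `x n ≥ α`. -/
lemma jump10 {T : ℕ} {x : ℕ → ℝ} {α β : ℝ} {n : ℕ} (hαβ : β < α) (hT : n + 1 < T)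
    (h1 : RS T x α β n = 1) (h0 : RS T x α β (n+1) = 0) : α ≤ x n := by
  by_contra hc; push_neg at hc
  have hb : β < x n := by
    by_contra hb; push_neg at hb
    rw [RS_zero hαβ hb] at h1; norm_num at h1
  obtain ⟨hL, hR⟩ := (RS_mid_one_iff hb hc).mp h1
  have hx1α : x (n+1) < α := RS_lt_alpha h0
  have hx1β : β < x (n+1) := by
    by_contra hb1; push_neg at hb1
    rcases hR with h | ⟨s, hs1, hs2, hsα, h⟩
    · exact absurd (h (n+1) (Nat.le_succ n) hT).1 (not_lt.2 hb1)
    · rcases eq_or_lt_of_le (Nat.succ_le_of_lt hs1) with heq | hlt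
      · rw [← heq] at hsα; linarith
      · exact absurd (h (n+1) (Nat.le_succ n) hlt).1 (not_lt.2 hb1)
  have : RS T x α β (n+1) = 1 := by
    rw [RS_mid_one_iff hx1β hx1α]
    constructor
    · exact Lc_extend hL hx1β hx1α
    · rcases hR with h | ⟨s, hs1, hs2, hsα, h⟩
      · left; exact fun s hs hsT => h s (le_trans (Nat.le_succ n) hs) hsT
      · right
        have hne : s ≠ n + 1 := by rintro rfl; linarith
        have hlt : n + 1 < s := lt_of_le_of_ne (Nat.succ_le_of_lt hs1) (Ne.symm hne)
        exact ⟨s, hlt, hs2, hsα, fun u hu1 hu2 => h u (le_trans (Nat.le_succ n) hu1) hu2⟩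
  rw [this] at h0; norm_num at h0

/-- A `0 → 1` jump of `RS` requires `x (n+1) ≥ α`. -/
lemma jump01 {T : ℕ} {x : ℕ → ℝ} {α β : ℝ} {n : ℕ} (hαβ : β < α)
    (h0 : RS T x α β n = 0) (h1 : RS T x α β (n+1) = 1) : α ≤ x (n+1) := by
  by_contra hc; push_neg at hc
  have hb : β < x (n+1) := by
    by_contra hb; push_neg at hb
    rw [RS_zero hαβ hb] at h1; norm_num at h1
  obtain ⟨hL, hR⟩ := (RS_mid_one_iff hb hc).mp h1
  have hxnα : x n < α := RS_lt_alpha h0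
  have hxnβ : β < x n := by
    by_contra hb1; push_neg at hb1
    rcases hL with h | ⟨s, hs1, hsα, h⟩
    · exact absurd (h n (Nat.le_succ n)).1 (not_lt.2 hb1)
    · rcases Nat.lt_succ_iff_lt_or_eq.mp hs1 with hlt | rfl
      · exact absurd (h n hlt (Nat.le_succ n)).1 (not_lt.2 hb1)
      · linarith
  have : RS T x α β n = 1 := by
    rw [RS_mid_one_iff hxnβ hxnα]
    constructor
    · rcases hL with h | ⟨s, hs1, hsα, h⟩
      · left; exact fun s hs => h s (le_trans hs (Nat.le_succ n))
      · rcases Nat.lt_succ_iff_lt_or_eq.mp hs1 with hlt | rfl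
        · right; exact ⟨s, hlt, hsα, fun u hu1 hu2 => h u hu1 (le_trans hu2 (Nat.le_succ n))⟩
        · linarith
    · rcases hR with h | ⟨s, hs1, hs2, hsα, h⟩
      · left
        intro s hs hsT
        rcases eq_or_lt_of_le hs with rfl | hlt
        · exact ⟨hxnβ, hxnα⟩
        · exact h s (Nat.succ_le_of_lt hlt) hsT
      · right
        refine ⟨s, lt_trans n.lt_succ_self hs1, hs2, hsα, fun u hu1 hu2 => ?_⟩
        rcases eq_or_lt_of_le hu1 with rfl | hlt
        · exact ⟨hxnβ, hxnα⟩
        · exact h u (Nat.succ_le_of_lt hlt) hu2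
  rw [this] at h0; norm_num at h0

/-- If the left condition holds at `n` and `x (n+1) ≥ α` then `RS n = 1`. -/
lemma Lc_one {T : ℕ} {x : ℕ → ℝ} {α β : ℝ} {n : ℕ} (hT : n + 1 < T)
    (hL : Lc x α β n) (hx : α ≤ x (n+1)) : RS T x α β n = 1 := by
  obtain ⟨h1, h2⟩ := Lc_self hL
  rw [RS_mid_one_iff h1 h2]
  refine ⟨hL, Or.inr ⟨n+1, n.lt_succ_self, hT, hx, fun u hu1 hu2 => ?_⟩⟩
  have : u = n := le_antisymm (Nat.lt_succ_iff.mp hu2) hu1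
  rw [this]; exact ⟨h1, h2⟩

/-- If the left condition holds at the last time step, then `RS = 1` there. -/
lemma Lc_last {T : ℕ} {x : ℕ → ℝ} {α β : ℝ} {n : ℕ} (hT : n < T) (hT2 : T ≤ n + 1)
    (hL : Lc x α β n) : RS T x α β n = 1 := by
  obtain ⟨h1, h2⟩ := Lc_self hL
  rw [RS_mid_one_iff h1 h2]
  refine ⟨hL, Or.inl fun s hs hsT => ?_⟩
  have : s = n := le_antisymm (Nat.lt_succ_iff.mp (lt_of_lt_of_le hsT hT2)) hs
  rw [this]; exact ⟨h1, h2⟩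

/-- Partial transition cost of the rounded solution. -/
noncomputable def Jsum (T : ℕ) (x : ℕ → ℝ) (α β : ℝ) (n : ℕ) : ℝ :=
  ∑ t ∈ Finset.range n, |RS T x α β (t+1) - RS T x α β t|

/-- Partial transition cost of the fractional solution. -/
noncomputable def Vsum (x : ℕ → ℝ) (n : ℕ) : ℝ :=
  ∑ t ∈ Finset.range n, |x (t+1) - x t|

lemma Jsum_succ (T : ℕ) (x : ℕ → ℝ) (α β : ℝ) (n : ℕ) :
    Jsum T x α β (n+1) = Jsum T x α β n + |RS T x α β (n+1) - RS T x α β n| :=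
  Finset.sum_range_succ _ n

lemma Vsum_succ (x : ℕ → ℝ) (n : ℕ) :
    Vsum x (n+1) = Vsum x n + |x (n+1) - x n| :=
  Finset.sum_range_succ _ n

/-- The three-state invariant used for the transition-cost bound. -/
def InvRS (T : ℕ) (x : ℕ → ℝ) (α β : ℝ) (n : ℕ) : Prop :=
  (RS T x α β n = 1 ∧ (α - β) * Jsum T x α β n ≤ Vsum x n) ∨
  (RS T x α β n = 0 ∧ Lc x α β n ∧
      (α - β) * Jsum T x α β n ≤ Vsum x n + (x n - β)) ∨
  (RS T x α β n = 0 ∧ (α - β) * Jsum T x α β n ≤ Vsum x n ∧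
      (α - β) * Jsum T x α β n ≤ Vsum x n + (β - x n))

lemma Inv_zero {T : ℕ} {x : ℕ → ℝ} {α β : ℝ} (hαβ : β < α) : InvRS T x α β 0 := by
  unfold InvRS Jsum Vsum
  simp only [Finset.range_zero, Finset.sum_empty, mul_zero]
  rcases RS_mem T x α β 0 with h | h
  · rcases le_or_gt (x 0) β with hb | hb
    · exact Or.inr (Or.inr ⟨h, le_rfl, by linarith⟩)
    · refine Or.inr (Or.inl ⟨h, Or.inl fun s hs => ?_, by linarith⟩)
      have hs0 : s = 0 := Nat.le_zero.mp hs
      rw [hs0]; exact ⟨hb, RS_lt_alpha h⟩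
  · exact Or.inl ⟨h, le_rfl⟩

lemma Inv_succ {T : ℕ} {x : ℕ → ℝ} {α β : ℝ} {n : ℕ} (hαβ : β < α) (hn : n + 1 < T)
    (ih : InvRS T x α β n) : InvRS T x α β (n+1) := by
  have habs1 : x (n+1) - x n ≤ |x (n+1) - x n| := le_abs_self _
  have habs2 : x n - x (n+1) ≤ |x (n+1) - x n| := by
    rw [abs_sub_comm]; exact le_abs_self _
  have habs0 : (0:ℝ) ≤ |x (n+1) - x n| := abs_nonneg _
  unfold InvRS at ih ⊢
  rw [Jsum_succ, Vsum_succ]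
  rcases RS_mem T x α β (n+1) with hy1 | hy1
  · -- RS (n+1) = 0
    have hx1α : x (n+1) < α := RS_lt_alpha hy1
    rcases ih with ⟨h1, hu⟩ | ⟨h1, hL, hu⟩ | ⟨h1, hu1, hu2⟩
    · -- state 1, jump 1 → 0
      have hj : |RS T x α β (n+1) - RS T x α β n| = 1 := by rw [hy1, h1]; norm_num
      have hxa : α ≤ x n := jump10 hαβ hn h1 hy1
      rw [hj]
      rcases le_or_gt (x (n+1)) β with hb | hb
      · exact Or.inr (Or.inr ⟨hy1, by linarith, by linarith⟩)
      · refine Or.inr (Or.inl ⟨hy1,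
          Or.inr ⟨n, n.lt_succ_self, hxa, fun u hu1 hu2 => ?_⟩, by linarith⟩)
        have hu' : u = n + 1 := le_antisymm hu2 (Nat.succ_le_of_lt hu1)
        rw [hu']; exact ⟨hb, hx1α⟩
    · -- state 2, no jump
      have hj : |RS T x α β (n+1) - RS T x α β n| = 0 := by rw [hy1, h1]; norm_num
      have hM := Lc_self hL
      rw [hj]
      rcases le_or_gt (x (n+1)) β with hb | hb
      · exact Or.inr (Or.inr ⟨hy1, by linarith, by linarith⟩)
      · exact Or.inr (Or.inl ⟨hy1, Lc_extend hL hb hx1α, by linarith⟩)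
    · -- state 3, no jump
      have hj : |RS T x α β (n+1) - RS T x α β n| = 0 := by rw [hy1, h1]; norm_num
      rw [hj]
      exact Or.inr (Or.inr ⟨hy1, by linarith, by linarith⟩)
  · -- RS (n+1) = 1
    rcases ih with ⟨h1, hu⟩ | ⟨h1, hL, hu⟩ | ⟨h1, hu1, hu2⟩
    · -- state 1, no jump
      have hj : |RS T x α β (n+1) - RS T x α β n| = 0 := by rw [hy1, h1]; norm_num
      rw [hj]
      exact Or.inl ⟨hy1, by linarith⟩
    · -- state 2, jump 0 → 1 : impossible
      exfalso
      have hxa : α ≤ x (n+1) := jump01 hαβ h1 hy1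
      have hone := Lc_one hn hL hxa
      rw [hone] at h1; norm_num at h1
    · -- state 3, jump 0 → 1
      have hj : |RS T x α β (n+1) - RS T x α β n| = 1 := by rw [hy1, h1]; norm_num
      have hxa : α ≤ x (n+1) := jump01 hαβ h1 hy1
      rw [hj]
      exact Or.inl ⟨hy1, by linarith⟩

lemma Inv_all {T : ℕ} {x : ℕ → ℝ} {α β : ℝ} (hαβ : β < α) :
    ∀ n, n < T → InvRS T x α β n := by
  intro n
  induction n with
  | zero => exact fun _ => Inv_zero hαβ
  | succ n ih => exact fun h => Inv_succ hαβ h (ih (Nat.lt_of_succ_lt h))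

lemma key_bound {T : ℕ} {x : ℕ → ℝ} {α β : ℝ} (hαβ : β < α) (hT : 0 < T) :
    (α - β) * Jsum T x α β (T-1) ≤ Vsum x (T-1) := by
  have h1 : T - 1 < T := Nat.sub_lt hT one_pos
  have h2 : T ≤ T - 1 + 1 := by omega
  rcases Inv_all hαβ (T-1) h1 with ⟨_, hu⟩ | ⟨h0, hL, _⟩ | ⟨_, hu, _⟩
  · exact hu
  · exfalso
    have hone := Lc_last h1 h2 hL
    rw [hone] at h0; norm_num at h0
  · exact hu

/-- combined rounding bound for multistage prize-collecting
problems: for `1 > α > β > 0` and `y = RS(x,α,β)`, the penalty cost of `y` is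
at most `1/(1-α)` times that of `x`, and its transition cost at most
`1/(α-β)` times that of `x`. -/
theorem stmt_8 (T : ℕ) (x : ℕ → ℝ) (α β : ℝ)
    (hx : ∀ t, t < T → 0 ≤ x t ∧ x t ≤ 1)
    (hα : α < 1) (hαβ : β < α) (hβ : 0 < β)
    (π : ℕ → ℝ) (hπ : ∀ t, 0 ≤ π t) (w : ℝ) (hw : 0 ≤ w) :
    (∑ t ∈ Finset.range T, π t * (1 - RS T x α β t) ≤
        (1 / (1 - α)) * ∑ t ∈ Finset.range T, π t * (1 - x t)) ∧
      w * ∑ t ∈ Finset.range (T - 1), |RS T x α β (t + 1) - RS T x α β t| ≤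
        (w / (α - β)) * ∑ t ∈ Finset.range (T - 1), |x (t + 1) - x t| := by
  have h1α : (0:ℝ) < 1 - α := by linarith
  have hab : (0:ℝ) < α - β := by linarith
  constructor
  · rw [Finset.mul_sum]
    apply Finset.sum_le_sum
    intro t ht
    obtain ⟨hx0, hx1⟩ := hx t (Finset.mem_range.mp ht)
    rcases RS_mem T x α β t with h | h
    · have hxα : x t < α := RS_lt_alpha h
      rw [h, one_div_mul_eq_div, le_div_iff₀ h1α]
      nlinarith [mul_nonneg (hπ t) (sub_nonneg.mpr hxα.le)]
    · rw [h]
      have hnn : (0:ℝ) ≤ 1/(1-α) * (π t * (1 - x t)) :=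
        mul_nonneg (by positivity) (mul_nonneg (hπ t) (by linarith))
      linarith
  · rcases Nat.eq_zero_or_pos T with rfl | hT0
    · simp
    have hkey := key_bound (T := T) (x := x) (α := α) (β := β) hαβ hT0
    unfold Jsum Vsum at hkey
    have hne : α - β ≠ 0 := ne_of_gt hab
    have heq : (w/(α-β)) * ((α-β) * ∑ t ∈ Finset.range (T-1), |RS T x α β (t + 1) - RS T x α β t|)
        = w * ∑ t ∈ Finset.range (T-1), |RS T x α β (t + 1) - RS T x α β t| := by
      field_simp
    rw [← heq]
    exact mul_le_mul_of_nonneg_left hkey (div_nonneg hw hab.le)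
end

section
/- The randomized algorithm for multistage Prize-Collecting TSP has expected approximation ratio 1/(1 − e^{-2/5}) < 3.034: with γ = e^{-2/5}, α uniform on [γ,1], β = (3/5)α, each of the three cost components has expected ratio at most 1/(1−γ). -/
open MeasureTheory

namespace RSAux

variable {T : ℕ} {x : ℕ → ℝ} {α β : ℝ} {t : ℕ}

/-- strictly between the thresholds -/
def St (x : ℕ → ℝ) (α β : ℝ) (t : ℕ) : Prop := β < x t ∧ x t < α

def L (x : ℕ → ℝ) (α β : ℝ) (t : ℕ) : Prop :=
  (∀ s, s ≤ t → St x α β s) ∨ (∃ s, s < t ∧ α ≤ x s ∧ ∀ u, s < u → u ≤ t → St x α β u)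

def R (T : ℕ) (x : ℕ → ℝ) (α β : ℝ) (t : ℕ) : Prop :=
  (∀ s, t ≤ s → s < T → St x α β s) ∨
    (∃ s, t < s ∧ s < T ∧ α ≤ x s ∧ ∀ u, t ≤ u → u < s → St x α β u)

/-- a pending descent to `β` strictly inside the horizon -/
def D (T : ℕ) (x : ℕ → ℝ) (α β : ℝ) (t : ℕ) : Prop :=
  ∃ r, t < r ∧ r < T ∧ x r ≤ β ∧ ∀ u, t < u → u < r → St x α β u

lemma rs_pos1 (h : α ≤ x t) : RS T x α β t = 1 := by
  unfold RS; rw [if_pos h]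

lemma rs_pos2 (hn : ¬ α ≤ x t) (h2 : x t ≤ β) : RS T x α β t = 0 := by
  unfold RS; rw [if_neg hn, if_pos h2]

lemma rs_pos3 (hn : ¬ α ≤ x t) (h2 : ¬ x t ≤ β) (hLR : L x α β t ∧ R T x α β t) :
    RS T x α β t = 1 := by
  unfold RS; rw [if_neg hn, if_neg h2]; exact if_pos hLR

lemma rs_neg3 (hn : ¬ α ≤ x t) (h2 : ¬ x t ≤ β) (hLR : ¬ (L x α β t ∧ R T x α β t)) :
    RS T x α β t = 0 := by
  unfold RS; rw [if_neg hn, if_neg h2]; exact if_neg hLR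

lemma rs_mem (t : ℕ) : RS T x α β t = 0 ∨ RS T x α β t = 1 := by
  by_cases hα : α ≤ x t
  · exact Or.inr (rs_pos1 hα)
  by_cases h2 : x t ≤ β
  · exact Or.inl (rs_pos2 hα h2)
  by_cases h3 : L x α β t ∧ R T x α β t
  · exact Or.inr (rs_pos3 hα h2 h3)
  · exact Or.inl (rs_neg3 hα h2 h3)

lemma rs_nonneg (t : ℕ) : 0 ≤ RS T x α β t := by
  rcases rs_mem (T := T) (x := x) (α := α) (β := β) t with h | h <;> rw [h] <;> norm_num

lemma rs_le_one (t : ℕ) : RS T x α β t ≤ 1 := by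
  rcases rs_mem (T := T) (x := x) (α := α) (β := β) t with h | h <;> rw [h] <;> norm_num

lemma rs_one_of_ge (h : α ≤ x t) : RS T x α β t = 1 := rs_pos1 h

lemma rs_one_strict (h : RS T x α β t = 1) (hn : ¬ α ≤ x t) :
    St x α β t ∧ L x α β t ∧ R T x α β t := by
  by_cases h2 : x t ≤ β
  · rw [rs_pos2 hn h2] at h; exact absurd h (by norm_num)
  by_cases h3 : L x α β t ∧ R T x α β t
  · exact ⟨⟨not_le.1 h2, not_le.1 hn⟩, h3⟩
  · rw [rs_neg3 hn h2 h3] at h; exact absurd h (by norm_num)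

lemma rs_zero_not_ge (h : RS T x α β t = 0) : ¬ α ≤ x t := by
  intro hα; rw [rs_pos1 hα] at h; exact one_ne_zero h

lemma rs_zero_not_LR (h : RS T x α β t = 0) (hβ' : ¬ x t ≤ β) :
    ¬ (L x α β t ∧ R T x α β t) := by
  have hα := rs_zero_not_ge h
  intro hLR; rw [rs_pos3 hα hβ' hLR] at h; exact one_ne_zero h

lemma rs_one_of_strict (hst : St x α β t) (hL : L x α β t) (hR : R T x α β t) :
    RS T x α β t = 1 :=
  rs_pos3 (not_le.2 hst.2) (not_le.2 hst.1) ⟨hL, hR⟩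

/-- propagate a 1 to the right inside a strict stretch -/
lemma prop_right (hT : t + 1 < T) (h1 : RS T x α β t = 1) (hlt : x t < α) :
    RS T x α β (t + 1) = 1 := by
  obtain ⟨hst, hL, hR⟩ := rs_one_strict h1 (not_le.2 hlt)
  by_cases hα1 : α ≤ x (t + 1)
  · exact rs_one_of_ge hα1
  have hst1 : St x α β (t + 1) := by
    rcases hR with hall | ⟨s, hs, hsT, hsα, hstr⟩
    · exact hall (t + 1) (by omega) hT
    · have hne : s ≠ t + 1 := fun e => hα1 (e ▸ hsα)
      exact hstr (t + 1) (by omega) (by omega)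
  have hL1 : L x α β (t + 1) := by
    rcases hL with hall | ⟨s, hs, hsα, hstr⟩
    · left; intro u hu
      rcases Nat.lt_or_ge u (t + 1) with h | h
      · exact hall u (by omega)
      · have : u = t + 1 := by omega
        exact this ▸ hst1
    · right; refine ⟨s, by omega, hsα, fun u hu1 hu2 => ?_⟩
      rcases Nat.lt_or_ge u (t + 1) with h | h
      · exact hstr u hu1 (by omega)
      · have : u = t + 1 := by omega
        exact this ▸ hst1
  have hR1 : R T x α β (t + 1) := by
    rcases hR with hall | ⟨s, hs, hsT, hsα, hstr⟩
    · left; intro u hu huT; exact hall u (by omega) huT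
    · have hne : s ≠ t + 1 := fun e => hα1 (e ▸ hsα)
      right; exact ⟨s, by omega, hsT, hsα, fun u hu1 hu2 => hstr u (by omega) hu2⟩
  exact rs_one_of_strict hst1 hL1 hR1

/-- propagate a 1 to the left inside a strict stretch -/
lemma prop_left (h1 : RS T x α β (t + 1) = 1) (hlt : x (t + 1) < α) :
    RS T x α β t = 1 := by
  obtain ⟨hst1, hL1, hR1⟩ := rs_one_strict h1 (not_le.2 hlt)
  by_cases hαt : α ≤ x t
  · exact rs_one_of_ge hαt
  have hstt : St x α β t := by
    rcases hL1 with hall | ⟨s, hs, hsα, hstr⟩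
    · exact hall t (by omega)
    · have hne : s ≠ t := fun e => hαt (e ▸ hsα)
      exact hstr t (by omega) (by omega)
  have hLt : L x α β t := by
    rcases hL1 with hall | ⟨s, hs, hsα, hstr⟩
    · left; intro u hu; exact hall u (by omega)
    · have hne : s ≠ t := fun e => hαt (e ▸ hsα)
      right; exact ⟨s, by omega, hsα, fun u hu1 hu2 => hstr u hu1 (by omega)⟩
  have hRt : R T x α β t := by
    rcases hR1 with hall | ⟨s, hs, hsT, hsα, hstr⟩
    · left; intro u hu huT
      rcases Nat.lt_or_ge u (t + 1) with h | h
      · have : u = t := by omega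
        exact this ▸ hstt
      · exact hall u h huT
    · right; refine ⟨s, by omega, hsT, hsα, fun u hu1 hu2 => ?_⟩
      rcases Nat.lt_or_ge u (t + 1) with h | h
      · have : u = t := by omega
        exact this ▸ hstt
      · exact hstr u h hu2
  exact rs_one_of_strict hstt hLt hRt

open Classical in
/-- a strict `0` whose left condition holds must have a pending descent -/
lemma d_of_left (h0 : RS T x α β t = 0) (hst : St x α β t) (hL : L x α β t) :
    D T x α β t := by
  have hnR : ¬ R T x α β t := fun hR => rs_zero_not_LR h0 (not_le.2 hst.1) ⟨hL, hR⟩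
  have hex : ∃ s, t < s ∧ s < T ∧ ¬ St x α β s := by
    by_contra hno
    push_neg at hno
    exact hnR (Or.inl fun u hu huT => by
      rcases Nat.eq_or_lt_of_le hu with h | h
      · exact h ▸ hst
      · exact hno u h huT)
  set r := Nat.find hex with hr
  obtain ⟨hr1, hr2, hr3⟩ := Nat.find_spec hex
  have hbet : ∀ u, t < u → u < r → St x α β u := by
    intro u hu1 hu2
    by_contra hc
    exact Nat.find_min hex hu2 ⟨hu1, by omega, hc⟩
  have hrβ : x r ≤ β := by
    rcases le_or_gt (x r) β with h | h
    · exact h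
    rcases lt_or_ge (x r) α with h' | h'
    · exact absurd ⟨h, h'⟩ hr3
    · exact absurd (Or.inr ⟨r, hr1, hr2, h', fun u hu1 hu2 => by
        rcases Nat.eq_or_lt_of_le hu1 with h'' | h''
        · exact h'' ▸ hst
        · exact hbet u h'' hu2⟩) hnR
  exact ⟨r, hr1, hr2, hrβ, hbet⟩

lemma d_succ_iff (hst1 : St x α β (t + 1)) : D T x α β t ↔ D T x α β (t + 1) := by
  constructor
  · rintro ⟨r, h1, h2, h3, h4⟩
    have hne : r ≠ t + 1 := fun e => absurd (e ▸ h3) (not_le.2 hst1.1)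
    exact ⟨r, by omega, h2, h3, fun u a b => h4 u (by omega) b⟩
  · rintro ⟨r, h1, h2, h3, h4⟩
    refine ⟨r, by omega, h2, h3, fun u a b => ?_⟩
    rcases Nat.eq_or_lt_of_le a with h | h
    · exact h.symm ▸ hst1
    · exact h4 u (by omega) b

open Classical in
/-- the potential function -/
noncomputable def G (T : ℕ) (x : ℕ → ℝ) (α β : ℝ) (t : ℕ) : ℝ :=
  if RS T x α β t = 1 then 0
  else if x t ≤ β then 0
  else if D T x α β t then β - x t else x t - β

lemma g_of_one (h : RS T x α β t = 1) : G T x α β t = 0 := by simp [G, h]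

lemma g_of_leβ (h : x t ≤ β) : G T x α β t = 0 := by
  unfold G; split_ifs <;> simp [h] at * <;> linarith

lemma g_of_D (h : RS T x α β t ≠ 1) (h2 : ¬ x t ≤ β) (hD : D T x α β t) :
    G T x α β t = β - x t := by simp [G, h, h2, hD]

lemma g_of_nD (h : RS T x α β t ≠ 1) (h2 : ¬ x t ≤ β) (hD : ¬ D T x α β t) :
    G T x α β t = x t - β := by simp [G, h, h2, hD]

lemma zero_ne_one' : (0 : ℝ) ≠ 1 := by norm_num

/-- the key one-step amortized inequality -/
lemma step (hβα : β < α) (hT : t + 1 < T) :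
    (α - β) * |RS T x α β (t + 1) - RS T x α β t| ≤
      |x (t + 1) - x t| + (G T x α β t - G T x α β (t + 1)) := by
  have habs1 : x t - x (t + 1) ≤ |x (t + 1) - x t| := by
    rw [abs_sub_comm]; exact le_abs_self _
  have habs2 : x (t + 1) - x t ≤ |x (t + 1) - x t| := le_abs_self _
  rcases rs_mem (T := T) (x := x) (α := α) (β := β) t with h0 | h1 <;>
    rcases rs_mem (T := T) (x := x) (α := α) (β := β) (t + 1) with k0 | k1
  · -- 0 → 0
    rw [h0, k0]
    simp only [sub_zero, abs_zero, mul_zero]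
    have hnα1 : ¬ α ≤ x (t + 1) := rs_zero_not_ge k0
    have hnαt : ¬ α ≤ x t := rs_zero_not_ge h0
    rcases le_or_gt (x (t + 1)) β with hb1 | hb1
    · rw [g_of_leβ hb1]
      rcases le_or_gt (x t) β with hbt | hbt
      · rw [g_of_leβ hbt]; positivity
      · by_cases hD : D T x α β t
        · rw [g_of_D (h0 ▸ zero_ne_one') (not_le.2 hbt) hD]; linarith
        · rw [g_of_nD (h0 ▸ zero_ne_one') (not_le.2 hbt) hD]
          have := abs_nonneg (x (t + 1) - x t); linarith
    · have hst1 : St x α β (t + 1) := ⟨hb1, not_le.1 hnα1⟩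
      by_cases hD1 : D T x α β (t + 1)
      · rw [g_of_D (k0 ▸ zero_ne_one') (not_le.2 hb1) hD1]
        rcases le_or_gt (x t) β with hbt | hbt
        · rw [g_of_leβ hbt]
          have := abs_nonneg (x (t + 1) - x t); linarith
        · have hDt : D T x α β t := (d_succ_iff hst1).2 hD1
          rw [g_of_D (h0 ▸ zero_ne_one') (not_le.2 hbt) hDt]; linarith
      · rw [g_of_nD (k0 ▸ zero_ne_one') (not_le.2 hb1) hD1]
        rcases le_or_gt (x t) β with hbt | hbt
        · rw [g_of_leβ hbt]; linarith
        · have hDt : ¬ D T x α β t := fun h => hD1 ((d_succ_iff hst1).1 h)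
          rw [g_of_nD (h0 ▸ zero_ne_one') (not_le.2 hbt) hDt]; linarith
  · -- 0 → 1 : up switch
    rw [h0, k1, g_of_one k1]
    have hα1 : α ≤ x (t + 1) := by
      by_contra hc
      have := prop_left k1 (not_le.1 hc)
      rw [h0] at this; exact zero_ne_one' this
    have h1abs : |(1 : ℝ) - 0| = 1 := by norm_num
    rw [h1abs, mul_one]
    have hnαt : ¬ α ≤ x t := rs_zero_not_ge h0
    rcases le_or_gt (x t) β with hbt | hbt
    · rw [g_of_leβ hbt]; linarith
    · have hnD : ¬ D T x α β t := by
        rintro ⟨r, hr1, hr2, hr3, hr4⟩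
        rcases Nat.lt_or_ge (t + 1) r with h | h
        · exact absurd (hr4 (t + 1) (by omega) h).2 (not_lt.2 hα1)
        · have : r = t + 1 := by omega
          rw [this] at hr3; linarith
      rw [g_of_nD (h0 ▸ zero_ne_one') (not_le.2 hbt) hnD]; linarith
  · -- 1 → 0 : down switch
    rw [h1, k0, g_of_one h1]
    have hαt : α ≤ x t := by
      by_contra hc
      have := prop_right hT h1 (not_le.1 hc)
      rw [k0] at this; exact zero_ne_one' this
    have h1abs : |(0 : ℝ) - 1| = 1 := by norm_num
    rw [h1abs, mul_one]
    have hnα1 : ¬ α ≤ x (t + 1) := rs_zero_not_ge k0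
    rcases le_or_gt (x (t + 1)) β with hb1 | hb1
    · rw [g_of_leβ hb1]; linarith
    · have hst1 : St x α β (t + 1) := ⟨hb1, not_le.1 hnα1⟩
      have hL1 : L x α β (t + 1) := Or.inr ⟨t, by omega, hαt, fun u hu1 hu2 => by
        have : u = t + 1 := by omega
        exact this ▸ hst1⟩
      have hD1 : D T x α β (t + 1) := d_of_left k0 hst1 hL1
      rw [g_of_D (k0 ▸ zero_ne_one') (not_le.2 hb1) hD1]; linarith
  · -- 1 → 1
    rw [h1, k1, g_of_one h1, g_of_one k1]
    simp only [sub_self, abs_zero, mul_zero, sub_zero]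
    positivity

lemma g_zero_le : G T x α β 0 ≤ 0 := by
  by_cases h1 : RS T x α β 0 = 1
  · rw [g_of_one h1]
  rcases le_or_gt (x 0) β with hb | hb
  · rw [g_of_leβ hb]
  · have h0 : RS T x α β 0 = 0 := (rs_mem 0).resolve_right h1
    have hnα : ¬ α ≤ x 0 := rs_zero_not_ge h0
    have hst : St x α β 0 := ⟨hb, not_le.1 hnα⟩
    have hL : L x α β 0 := Or.inl fun u hu => by
      have : u = 0 := by omega
      exact this ▸ hst
    have hD := d_of_left h0 hst hL
    rw [g_of_D h1 (not_le.2 hb) hD]; linarith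

lemma g_last_nonneg : 0 ≤ G T x α β (T - 1) := by
  by_cases h1 : RS T x α β (T - 1) = 1
  · rw [g_of_one h1]
  rcases le_or_gt (x (T - 1)) β with hb | hb
  · rw [g_of_leβ hb]
  · have hnD : ¬ D T x α β (T - 1) := by
      rintro ⟨r, hr1, hr2, _, _⟩; omega
    rw [g_of_nD h1 (not_le.2 hb) hnD]; linarith

/-- total switching cost is at most total variation -/
lemma sum_step (hβα : β < α) :
    (α - β) * ∑ t ∈ Finset.range (T - 1), |RS T x α β (t + 1) - RS T x α β t| ≤
      ∑ t ∈ Finset.range (T - 1), |x (t + 1) - x t| := by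
  rw [Finset.mul_sum]
  calc ∑ t ∈ Finset.range (T - 1), (α - β) * |RS T x α β (t + 1) - RS T x α β t|
      ≤ ∑ t ∈ Finset.range (T - 1),
          (|x (t + 1) - x t| + (G T x α β t - G T x α β (t + 1))) := by
        refine Finset.sum_le_sum fun t ht => ?_
        exact step hβα (by have := Finset.mem_range.1 ht; omega)
    _ = (∑ t ∈ Finset.range (T - 1), |x (t + 1) - x t|) +
          (G T x α β 0 - G T x α β (T - 1)) := by
        rw [Finset.sum_add_distrib, Finset.sum_range_sub' (fun t => G T x α β t)]
    _ ≤ ∑ t ∈ Finset.range (T - 1), |x (t + 1) - x t| := by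
        have h1 := g_zero_le (T := T) (x := x) (α := α) (β := β)
        have h2 := g_last_nonneg (T := T) (x := x) (α := α) (β := β)
        linarith

end RSAux


namespace RSAux

lemma key_var (a : ℝ) (ha : 0 < a) (x : ℕ → ℝ) (T : ℕ) :
    ∑ t ∈ Finset.range (T - 1), |RS T x a ((3 / 5) * a) (t + 1) - RS T x a ((3 / 5) * a) t| ≤
      (5 / (2 * a)) * ∑ t ∈ Finset.range (T - 1), |x (t + 1) - x t| := by
  have hβα : (3 / 5) * a < a := by linarith
  have h := sum_step (T := T) (x := x) hβα
  have h2 : a - (3 / 5) * a = (2 / 5) * a := by ring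
  rw [h2] at h
  rw [show (5 / (2 * a)) * ∑ t ∈ Finset.range (T - 1), |x (t + 1) - x t|
      = (∑ t ∈ Finset.range (T - 1), |x (t + 1) - x t|) / ((2 / 5) * a) by
        field_simp]
  rw [le_div_iff₀ (by positivity)]
  nlinarith [h]

lemma int_const_div (γ : ℝ) (hγ : γ = Real.exp (-(2 / 5))) (C : ℝ) :
    ∫ a in Set.Icc γ 1, (5 / (2 * a)) * C = C := by
  have h0 : 0 < γ := hγ ▸ Real.exp_pos _
  have h1 : γ < 1 := by
    rw [hγ, ← Real.exp_zero]; exact Real.exp_lt_exp.2 (by norm_num)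
  have huIcc : Set.uIcc γ (1 : ℝ) = Set.Icc γ 1 := Set.uIcc_of_le h1.le
  have h0mem : (0 : ℝ) ∉ Set.uIcc γ (1 : ℝ) := by
    rw [huIcc]; rintro ⟨hh, _⟩; linarith
  rw [MeasureTheory.integral_Icc_eq_integral_Ioc, ← intervalIntegral.integral_of_le h1.le]
  calc ∫ a in γ..1, (5 / (2 * a)) * C
      = ∫ a in γ..1, ((5 / 2) * C) * a⁻¹ := by
        refine intervalIntegral.integral_congr fun a ha => ?_
        rw [huIcc] at ha
        have ha0 : a ≠ 0 := by have := ha.1; intro hc; rw [hc] at this; linarith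
        field_simp
        try ring
    _ = ((5 / 2) * C) * ∫ a in γ..1, a⁻¹ := intervalIntegral.integral_const_mul _ _
    _ = ((5 / 2) * C) * Real.log (1 / γ) := by rw [integral_inv h0mem]
    _ = C := by
        rw [one_div, Real.log_inv, hγ, Real.log_exp]; ring

end RSAux


/-- randomized multistage Prize-Collecting TSP.  With
`γ = e^{-2/5}`, `α` uniform on `[γ,1]` and `β = (3/5)α`, each of the three
cost components — penalty, transition, and edge (the latter incurring factor
`3/(2β) = 5/(2α)` against the fractional edge cost `cE`) — has expected value
at most `1/(1-γ)` times the corresponding fractional component, and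
`1/(1-γ) < 3.034`. -/
theorem stmt_16 {V : Type*} [Fintype V] (T : ℕ)
    (s : V → ℕ → ℝ) (hs : ∀ v t, t < T → 0 ≤ s v t ∧ s v t ≤ 1)
    (π : V → ℕ → ℝ) (hπ : ∀ v t, 0 ≤ π v t)
    (w : V → ℝ) (hw : ∀ v, 0 ≤ w v)
    (cE : ℕ → ℝ) (hcE : ∀ t, 0 ≤ cE t) :
    (let γ : ℝ := Real.exp (-(2 / 5));
      ((1 / (1 - γ)) *
          ∫ a in Set.Icc γ 1,
            ∑ t ∈ Finset.range T, ∑ v : V,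
              π v t * (1 - RS T (s v) a ((3 / 5) * a) t) ≤
        (1 / (1 - γ)) *
          ∑ t ∈ Finset.range T, ∑ v : V, π v t * (1 - s v t)) ∧
      ((1 / (1 - γ)) *
          ∫ a in Set.Icc γ 1,
            ∑ t ∈ Finset.range (T - 1), ∑ v : V,
              w v * |RS T (s v) a ((3 / 5) * a) (t + 1) -
                      RS T (s v) a ((3 / 5) * a) t| ≤
        (1 / (1 - γ)) *
          ∑ t ∈ Finset.range (T - 1), ∑ v : V,
            w v * |s v (t + 1) - s v t|) ∧
      ((1 / (1 - γ)) *
          ∫ a in Set.Icc γ 1,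
            ∑ t ∈ Finset.range T, (3 / (2 * ((3 / 5) * a))) * cE t ≤
        (1 / (1 - γ)) * ∑ t ∈ Finset.range T, cE t) ∧
      1 / (1 - γ) < 3.034) := by
  intro γ
  have hγ : γ = Real.exp (-(2 / 5)) := rfl
  have hγ0 : 0 < γ := Real.exp_pos _
  have hγ1 : γ < 1 := by
    rw [hγ, ← Real.exp_zero]; exact Real.exp_lt_exp.2 (by norm_num)
  have h1γ : 0 < 1 - γ := by linarith
  have hfrac : 0 ≤ 1 / (1 - γ) := by positivity
  refine ⟨?_, ?_, ?_, ?_⟩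
  · -- penalty component
    refine mul_le_mul_of_nonneg_left ?_ hfrac
    set g1 : ℝ → ℝ := fun a => ∑ t ∈ Finset.range T, ∑ v : V,
      π v t * (Set.Ioi (s v t)).indicator (fun _ => (1 : ℝ)) a with hg1
    have hIccfin : volume (Set.Icc γ (1 : ℝ)) < ⊤ := by
      rw [Real.volume_Icc]; exact ENNReal.ofReal_lt_top
    have hind : ∀ (c : ℝ), Integrable ((Set.Ioi c).indicator (fun _ => (1 : ℝ)))
        (volume.restrict (Set.Icc γ 1)) := fun c =>
      (MeasureTheory.integrableOn_const hIccfin.ne (by simp)).indicator measurableSet_Ioi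
    have hint : Integrable g1 (volume.restrict (Set.Icc γ 1)) := by
      refine MeasureTheory.integrable_finset_sum _ fun t _ => ?_
      exact MeasureTheory.integrable_finset_sum _ fun v _ => (hind (s v t)).const_mul _
    refine le_trans (MeasureTheory.integral_mono_of_nonneg ?_ hint ?_) ?_
    · exact Filter.Eventually.of_forall fun a => Finset.sum_nonneg fun t _ =>
        Finset.sum_nonneg fun v _ => mul_nonneg (hπ v t)
          (by linarith [RSAux.rs_le_one (T := T) (x := s v) (α := a) (β := (3 / 5) * a) t])
    · refine (MeasureTheory.ae_restrict_iff' measurableSet_Icc).2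
        (Filter.Eventually.of_forall fun a ha => ?_)
      refine Finset.sum_le_sum fun t _ => Finset.sum_le_sum fun v _ => ?_
      rcases le_or_gt a (s v t) with h | h
      · rw [RSAux.rs_pos1 h]
        simp only [sub_self, mul_zero]
        exact mul_nonneg (hπ v t) (Set.indicator_nonneg (fun _ _ => zero_le_one) a)
      · rw [Set.indicator_of_mem (Set.mem_Ioi.2 h)]
        refine mul_le_mul_of_nonneg_left ?_ (hπ v t)
        have := RSAux.rs_nonneg (T := T) (x := s v) (α := a) (β := (3 / 5) * a) t
        linarith
    · have hval : ∫ a in Set.Icc γ 1, g1 a = ∑ t ∈ Finset.range T, ∑ v : V,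
          π v t * (volume (Set.Ioi (s v t) ∩ Set.Icc γ 1)).toReal := by
        rw [MeasureTheory.integral_finset_sum _ (fun t _ =>
          MeasureTheory.integrable_finset_sum _ fun v _ => (hind (s v t)).const_mul _)]
        refine Finset.sum_congr rfl fun t _ => ?_
        rw [MeasureTheory.integral_finset_sum _ (fun v _ => (hind (s v t)).const_mul _)]
        refine Finset.sum_congr rfl fun v _ => ?_
        rw [MeasureTheory.integral_const_mul]
        congr 1
        rw [MeasureTheory.integral_indicator measurableSet_Ioi,
          MeasureTheory.setIntegral_const, measureReal_restrict_apply measurableSet_Ioi,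
          measureReal_def]
        rw [smul_eq_mul, mul_one]
      rw [hval]
      refine Finset.sum_le_sum fun t ht => Finset.sum_le_sum fun v _ => ?_
      refine mul_le_mul_of_nonneg_left ?_ (hπ v t)
      have hc1 : s v t ≤ 1 := (hs v t (Finset.mem_range.1 ht)).2
      have hsub : Set.Ioi (s v t) ∩ Set.Icc γ 1 ⊆ Set.Ioc (s v t) 1 :=
        fun z hz => ⟨hz.1, hz.2.2⟩
      have h1 : volume (Set.Ioi (s v t) ∩ Set.Icc γ 1) ≤ ENNReal.ofReal (1 - s v t) := by
        rw [← Real.volume_Ioc]; exact measure_mono hsub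
      calc (volume (Set.Ioi (s v t) ∩ Set.Icc γ 1)).toReal
          ≤ (ENNReal.ofReal (1 - s v t)).toReal :=
            ENNReal.toReal_mono ENNReal.ofReal_ne_top h1
        _ = 1 - s v t := ENNReal.toReal_ofReal (by linarith)
  · -- transition component
    refine mul_le_mul_of_nonneg_left ?_ hfrac
    set K := ∑ t ∈ Finset.range (T - 1), ∑ v : V, w v * |s v (t + 1) - s v t| with hK
    refine le_trans (MeasureTheory.integral_mono_of_nonneg ?_ ?_ ?_)
      (le_of_eq (RSAux.int_const_div γ hγ K))
    · exact Filter.Eventually.of_forall fun a => Finset.sum_nonneg fun t _ =>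
        Finset.sum_nonneg fun v _ => mul_nonneg (hw v) (abs_nonneg _)
    · refine (ContinuousOn.integrableOn_Icc ?_)
      refine ContinuousOn.mul ?_ continuousOn_const
      refine ContinuousOn.div continuousOn_const (continuousOn_const.mul continuousOn_id)
        fun a ha => ?_
      have h1 := ha.1
      intro hc
      have ha0 : a = 0 := by linarith
      rw [ha0] at h1; linarith
    · refine (MeasureTheory.ae_restrict_iff' measurableSet_Icc).2
        (Filter.Eventually.of_forall fun a ha => ?_)
      have ha0 : 0 < a := lt_of_lt_of_le hγ0 ha.1
      calc ∑ t ∈ Finset.range (T - 1), ∑ v : V,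
              w v * |RS T (s v) a ((3 / 5) * a) (t + 1) - RS T (s v) a ((3 / 5) * a) t|
          = ∑ v : V, ∑ t ∈ Finset.range (T - 1),
              w v * |RS T (s v) a ((3 / 5) * a) (t + 1) - RS T (s v) a ((3 / 5) * a) t| :=
            Finset.sum_comm
        _ = ∑ v : V, w v * ∑ t ∈ Finset.range (T - 1),
              |RS T (s v) a ((3 / 5) * a) (t + 1) - RS T (s v) a ((3 / 5) * a) t| := by
            simp [Finset.mul_sum]
        _ ≤ ∑ v : V, w v * ((5 / (2 * a)) * ∑ t ∈ Finset.range (T - 1),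
              |s v (t + 1) - s v t|) := by
            exact Finset.sum_le_sum fun v _ =>
              mul_le_mul_of_nonneg_left (RSAux.key_var a ha0 (s v) T) (hw v)
        _ = (5 / (2 * a)) * K := by
            rw [hK, show (∑ t ∈ Finset.range (T - 1), ∑ v : V, w v * |s v (t + 1) - s v t|)
                = ∑ v : V, ∑ t ∈ Finset.range (T - 1), w v * |s v (t + 1) - s v t| from
                Finset.sum_comm]
            simp only [Finset.mul_sum]
            exact Finset.sum_congr rfl fun v _ => Finset.sum_congr rfl fun t _ => by ring
  · -- edge component
    refine mul_le_mul_of_nonneg_left (le_of_eq ?_) hfrac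
    have heq : Set.EqOn (fun a : ℝ => ∑ t ∈ Finset.range T, (3 / (2 * ((3 / 5) * a))) * cE t)
        (fun a : ℝ => (5 / (2 * a)) * ∑ t ∈ Finset.range T, cE t) (Set.Icc γ 1) := by
      intro a ha
      have ha0 : a ≠ 0 := by have := ha.1; intro hc; rw [hc] at this; linarith
      simp only
      rw [Finset.mul_sum]
      refine Finset.sum_congr rfl fun t _ => ?_
      field_simp
    rw [MeasureTheory.setIntegral_congr_fun measurableSet_Icc heq]
    exact RSAux.int_const_div γ hγ _
  · -- numeric bound
    have h := Real.sum_le_exp_of_nonneg (by norm_num : (0:ℝ) ≤ 2/5) 5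
    rw [Finset.sum_range_succ, Finset.sum_range_succ, Finset.sum_range_succ,
      Finset.sum_range_succ, Finset.sum_range_succ, Finset.sum_range_zero] at h
    norm_num [Nat.factorial] at h
    have hsum : (1517 : ℝ)/1017 < Real.exp (2/5) := by nlinarith [h]
    have hγval : γ < 1017 / 1517 := by
      rw [hγ, Real.exp_neg, inv_lt_comm₀ (Real.exp_pos _) (by norm_num)]
      have h2 : ((1017 : ℝ) / 1517)⁻¹ = 1517 / 1017 := by norm_num
      rw [h2]; exact hsum
    rw [div_lt_iff₀ h1γ]
    nlinarith
end

section
/- Disjointness of jump witnesses: let y = RS(x, α, β) with 1 ≥ α > β ≥ 0, and suppose y has k indices t with y^t ≠ y^{t+1}. Then there exist k pairwise-disjoint (except possibly at endpoints, in the non-overlapping interior sense) time intervals [a_1,b_1],...,[a_k,b_k] with b_j ≤ a_{j+1}, such that for each j, |x^{b_j} − x^{a_j}| ≥ α − β. -/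
lemma Nat.exists_last_le {P : ℕ → Prop} {s t : ℕ} (hst : s ≤ t) (hs : P s) :
    ∃ r, r ≤ t ∧ P r ∧ ∀ u, r < u → u ≤ t → ¬P u := by
  classical
  exact ⟨Nat.findGreatest P t, Nat.findGreatest_le t, Nat.findGreatest_spec hst hs,
    fun _ h₁ h₂ => Nat.findGreatest_is_greatest h₁ h₂⟩

lemma Nat.exists_first_ge {P : ℕ → Prop} {s t : ℕ} (hts : t ≤ s) (hs : P s) :
    ∃ r, t ≤ r ∧ r ≤ s ∧ P r ∧ ∀ u, t ≤ u → u < r → ¬P u := by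
  classical
  have h : ∃ n, t ≤ n ∧ P n := ⟨s, hts, hs⟩
  exact ⟨Nat.find h, (Nat.find_spec h).1, Nat.find_min' h ⟨hts, hs⟩, (Nat.find_spec h).2,
    fun _ h₁ h₂ hu => Nat.find_min h h₂ ⟨h₁, hu⟩⟩

namespace RS

variable {T : ℕ} {x : ℕ → ℝ} {α β : ℝ} {t : ℕ}

def LowVisible (T : ℕ) (x : ℕ → ℝ) (α β : ℝ) (t : ℕ) : Prop :=
  ∃ s < T, x s ≤ β ∧ ∀ u ∈ Set.uIcc s t, u ≠ s → β < x u ∧ x u < α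

lemma lowVisible_self (hlow : x t ≤ β) (ht : t < T) : LowVisible T x α β t :=
  ⟨t, ht, hlow, fun u hu hne => absurd (by simpa using hu) hne⟩

lemma not_lowVisible_of_alpha_le (hαβ : β < α) (hhigh : α ≤ x t) : ¬LowVisible T x α β t := by
  rintro ⟨s, -, hs, hvis⟩
  have hts : t ≠ s := by
    rintro rfl
    linarith
  linarith [(hvis t Set.right_mem_uIcc hts).2]

lemma LowVisible.of_adjacent (h : LowVisible T x α β t) {t' : ℕ}
    (hband : β < x t' ∧ x t' < α) (hadj : t' = t + 1 ∨ t = t' + 1) :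
    LowVisible T x α β t' := by
  obtain ⟨s, hsT, hs, hvis⟩ := h
  refine ⟨s, hsT, hs, fun u hu hne => ?_⟩
  by_cases hut : u = t'
  · exact hut ▸ hband
  · exact hvis u (by rw [Set.mem_uIcc] at hu ⊢; omega) hne

lemma LowVisible.le_of_not_lowVisible (h : LowVisible T x α β t) {t' : ℕ}
    (h' : ¬LowVisible T x α β t') (hadj : t' = t + 1 ∨ t = t' + 1) (ht' : t' < T) :
    α ≤ x t' := by
  by_contra hlt
  rcases le_or_gt (x t') β with hlow | hgt
  · exact h' (lowVisible_self hlow ht')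
  · exact h' (h.of_adjacent ⟨hgt, not_le.mp hlt⟩ hadj)

lemma lowVisible_iff (ht : t < T) :
    LowVisible T x α β t ↔
      (∃ s ≤ t, x s ≤ β ∧ ∀ u, s < u → u ≤ t → β < x u ∧ x u < α) ∨
      (∃ s, t ≤ s ∧ s < T ∧ x s ≤ β ∧ ∀ u, t ≤ u → u < s → β < x u ∧ x u < α) := by
  constructor
  · rintro ⟨s, hsT, hs, hvis⟩
    rcases le_total s t with hst | hts
    · exact Or.inl ⟨s, hst, hs, fun u h₁ h₂ => hvis u (by rw [Set.mem_uIcc]; omega) (by omega)⟩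
    · exact Or.inr ⟨s, hts, hsT, hs, fun u h₁ h₂ =>
        hvis u (by rw [Set.mem_uIcc]; omega) (by omega)⟩
  · rintro (⟨s, hst, hs, hvis⟩ | ⟨s, hts, hsT, hs, hvis⟩)
    · refine ⟨s, by omega, hs, fun u hu hne => ?_⟩
      rw [Set.mem_uIcc] at hu
      exact hvis u (by omega) (by omega)
    · refine ⟨s, hsT, hs, fun u hu hne => ?_⟩
      rw [Set.mem_uIcc] at hu
      exact hvis u (by omega) (by omega)

/-- The left and right clauses in the band case of `RS` say that `t` sees no value `≤ β` on
that side. -/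
lemma left_condition_iff (hband : β < x t ∧ x t < α) :
    ((∀ s, s ≤ t → β < x s ∧ x s < α) ∨
      (∃ s, s < t ∧ α ≤ x s ∧ ∀ u, s < u → u ≤ t → β < x u ∧ x u < α)) ↔
      ¬∃ s ≤ t, x s ≤ β ∧ ∀ u, s < u → u ≤ t → β < x u ∧ x u < α := by
  constructor
  · rintro (hall | ⟨r, hrt, hr, hvis'⟩) ⟨s, hst, hs, hvis⟩
    · linarith [(hall s hst).1]
    · rcases lt_trichotomy s r with h | rfl | h
      · linarith [(hvis r h hrt.le).2]
      · linarith
      · linarith [(hvis' s h hst).1]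
  · intro hnone
    refine or_iff_not_imp_left.mpr fun hall => ?_
    obtain ⟨s, hst, hs⟩ := not_forall₂.mp hall
    obtain ⟨r, hrt, hr, hlast⟩ := Nat.exists_last_le (P := fun s => ¬(β < x s ∧ x s < α)) hst hs
    have hvis : ∀ u, r < u → u ≤ t → β < x u ∧ x u < α := fun u h₁ h₂ => not_not.mp (hlast u h₁ h₂)
    have hrt' : r ≠ t := by
      rintro rfl
      exact hr hband
    refine ⟨r, lt_of_le_of_ne hrt hrt', ?_, hvis⟩
    by_contra hlt
    exact hnone ⟨r, hrt, not_lt.mp fun hgt => hr ⟨hgt, not_le.mp hlt⟩, hvis⟩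

lemma right_condition_iff (hband : β < x t ∧ x t < α) :
    ((∀ s, t ≤ s → s < T → β < x s ∧ x s < α) ∨
      (∃ s, t < s ∧ s < T ∧ α ≤ x s ∧ ∀ u, t ≤ u → u < s → β < x u ∧ x u < α)) ↔
      ¬∃ s, t ≤ s ∧ s < T ∧ x s ≤ β ∧ ∀ u, t ≤ u → u < s → β < x u ∧ x u < α := by
  constructor
  · rintro (hall | ⟨r, htr, hrT, hr, hvis'⟩) ⟨s, hts, hsT, hs, hvis⟩
    · linarith [(hall s hts hsT).1]
    · rcases lt_trichotomy s r with h | rfl | h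
      · linarith [(hvis' s hts h).1]
      · linarith
      · linarith [(hvis r htr.le h).2]
  · intro hnone
    refine or_iff_not_imp_left.mpr fun hall => ?_
    push Not at hall
    obtain ⟨s, hts, hsT, hs⟩ := hall
    obtain ⟨r, htr, hrs, hr, hfirst⟩ :=
      Nat.exists_first_ge (P := fun s => ¬(β < x s ∧ x s < α)) hts (fun h => h.2.not_ge (hs h.1))
    have hvis : ∀ u, t ≤ u → u < r → β < x u ∧ x u < α := fun u h₁ h₂ => not_not.mp (hfirst u h₁ h₂)
    have htr' : t ≠ r := by
      rintro rfl
      exact hr hband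
    refine ⟨r, lt_of_le_of_ne htr htr', by omega, ?_, hvis⟩
    by_contra hlt
    exact hnone ⟨r, htr, by omega, not_lt.mp fun hgt => hr ⟨hgt, not_le.mp hlt⟩, hvis⟩

open Classical in
lemma eq_ite_lowVisible (hαβ : β < α) (ht : t < T) :
    RS T x α β t = if LowVisible T x α β t then 0 else 1 := by
  unfold RS
  rcases le_or_gt α (x t) with hhigh | hlt
  · rw [if_pos hhigh, if_neg (not_lowVisible_of_alpha_le hαβ hhigh)]
  rcases le_or_gt (x t) β with hlow | hgt
  · rw [if_neg hlt.not_ge, if_pos hlow, if_pos (lowVisible_self hlow ht)]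
  rw [if_neg hlt.not_ge, if_neg hgt.not_ge]
  simp only [left_condition_iff ⟨hgt, hlt⟩, right_condition_iff ⟨hgt, hlt⟩, lowVisible_iff ht]
  split_ifs with hnone hvis hvis
  · exact absurd hvis (not_or.mpr hnone)
  · rfl
  · rfl
  · exact absurd (not_or.mp hvis) hnone

structure IsJumpWitness (x : ℕ → ℝ) (α β : ℝ) (t a b : ℕ) : Prop where
  le : a ≤ t
  lt : t < b
  band : ∀ u, a < u → u < b → β < x u ∧ x u < α
  cross : (x a ≤ β ∧ α ≤ x b ∧ b = t + 1) ∨ (α ≤ x a ∧ x b ≤ β ∧ a = t)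

lemma exists_isJumpWitness (hαβ : β < α) (ht : t + 1 < T)
    (hjump : RS T x α β t ≠ RS T x α β (t + 1)) :
    ∃ a b, IsJumpWitness x α β t a b ∧ b < T := by
  rw [eq_ite_lowVisible hαβ (by omega), eq_ite_lowVisible hαβ ht] at hjump
  split_ifs at hjump with h h' h'
  · exact absurd rfl hjump
  · have hhigh := h.le_of_not_lowVisible h' (Or.inl rfl) ht
    obtain ⟨s, -, hs, hvis⟩ := h
    have hst : s ≤ t := by
      by_contra hts
      have hne : t + 1 ≠ s := by
        rintro rfl
        linarith
      linarith [(hvis (t + 1) (by rw [Set.mem_uIcc]; omega) hne).2]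
    exact ⟨s, t + 1, ⟨hst, t.lt_succ_self,
      fun u h₁ h₂ => hvis u (by rw [Set.mem_uIcc]; omega) (by omega), Or.inl ⟨hs, hhigh, rfl⟩⟩, ht⟩
  · have hhigh := h'.le_of_not_lowVisible h (Or.inr rfl) (by omega)
    obtain ⟨s, hsT, hs, hvis⟩ := h'
    have hts : t < s := by
      by_contra hst
      have hne : t ≠ s := by
        rintro rfl
        linarith
      linarith [(hvis t (by rw [Set.mem_uIcc]; omega) hne).2]
    exact ⟨t, s, ⟨le_rfl, hts,
      fun u h₁ h₂ => hvis u (by rw [Set.mem_uIcc]; omega) (by omega), Or.inr ⟨hhigh, hs, rfl⟩⟩, hsT⟩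
  · exact absurd rfl hjump

namespace IsJumpWitness

variable {a b : ℕ}

lemma sub_le_abs (h : IsJumpWitness x α β t a b) : α - β ≤ |x b - x a| := by
  rcases h.cross with ⟨ha, hb, -⟩ | ⟨ha, hb, -⟩
  · exact le_abs.mpr (Or.inl (by linarith))
  · exact le_abs.mpr (Or.inr (by linarith))

lemma right_le_left_of_lt (hαβ : β < α) (h : IsJumpWitness x α β t a b) {t' a' b' : ℕ}
    (h' : IsJumpWitness x α β t' a' b') (htt' : t < t') : b ≤ a' := by
  by_contra hlt
  push Not at hlt
  have hb' := h'.lt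
  rcases h.cross with ⟨-, hb, rfl⟩ | ⟨ha, -, rfl⟩
  · linarith [(h'.band (t + 1) hlt (by omega)).2]
  · have ha' : a' = a := by
      by_contra hne
      rcases Nat.lt_or_gt_of_ne hne with hlt' | hgt
      · linarith [(h'.band a hlt' (by omega)).2]
      · have hband := h.band a' hgt hlt
        rcases h'.cross with ⟨h₁, -⟩ | ⟨h₁, -⟩ <;> linarith [hband.1, hband.2]
    subst ha'
    rcases h'.cross with ⟨h₁, -⟩ | ⟨-, -, rfl⟩
    · linarith
    · exact htt'.false

end IsJumpWitness

end RS

open Classical in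
theorem stmt_18_general (T : ℕ) (x : ℕ → ℝ) (α β : ℝ)
    (hαβ : β < α)
    (k : ℕ)
    (hk : ((Finset.range (T - 1)).filter
      (fun t => RS T x α β t ≠ RS T x α β (t + 1))).card = k) :
    ∃ a b : ℕ → ℕ,
      (∀ j, j < k → a j ≤ b j ∧ b j < T ∧ α - β ≤ |x (b j) - x (a j)|) ∧
      (∀ j, j + 1 < k → b j ≤ a (j + 1)) := by
  let e := Finset.orderIsoOfFin _ hk
  have hjump (j : Fin k) : (e j : ℕ) + 1 < T ∧ RS T x α β (e j) ≠ RS T x α β (e j + 1) := by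
    have hj := (e j).2
    simp only [Finset.mem_filter, Finset.mem_range] at hj
    exact ⟨by omega, hj.2⟩
  choose a b hW hbT using fun j => RS.exists_isJumpWitness hαβ (hjump j).1 (hjump j).2
  refine ⟨fun j => if h : j < k then a ⟨j, h⟩ else 0, fun j => if h : j < k then b ⟨j, h⟩ else 0,
    fun j hj => ?_, fun j hj => ?_⟩
  · simp only [dif_pos hj]
    exact ⟨(hW _).le.trans (hW _).lt.le, hbT _, (hW _).sub_le_abs⟩
  · simp only [dif_pos hj, dif_pos (by omega : j < k)]
    exact (hW _).right_le_left_of_lt hαβ (hW _) (e.strictMono (Fin.mk_lt_mk.mpr j.lt_succ_self))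

open Classical in
/-- disjointness of jump witnesses.  If `y = RS(x,α,β)` has `k`
jump indices, then there are `k` essentially disjoint time intervals
`[a₁,b₁], …, [a_k,b_k]` (with `b_j ≤ a_{j+1}`), inside the horizon, on each of
which `x` varies by at least `α - β`. -/
theorem stmt_18 (T : ℕ) (x : ℕ → ℝ) (α β : ℝ)
    (hx : ∀ t, t < T → 0 ≤ x t ∧ x t ≤ 1)
    (hα : α ≤ 1) (hαβ : β < α) (hβ : 0 ≤ β)
    (k : ℕ)
    (hk : ((Finset.range (T - 1)).filter
      (fun t => RS T x α β t ≠ RS T x α β (t + 1))).card = k) :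
    ∃ a b : ℕ → ℕ,
      (∀ j, j < k → a j ≤ b j ∧ b j < T ∧ α - β ≤ |x (b j) - x (a j)|) ∧
      (∀ j, j + 1 < k → b j ≤ a (j + 1)) :=
  stmt_18_general T x α β hαβ k hk
end
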